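/- arXiv:2010.03417 — 3 statements merged into one kernel-verified Lean document; each statement's English description precedes it below -/
import Mathlib

section
/- Every fully commutative element of W(A_n) can be written uniquely in the normal form ⌈i_1,j_1⌉⌈i_2,j_2⌉···⌈i_p,j_p⌉ with 0 ≤ p ≤ n, n ≥ j_1 > ··· > j_p ≥ 1, n ≥ i_1 > ··· > i_p ≥ 1, and j_t ≥ i_t for all 1 ≤ t ≤ p, where ⌈i,j⌉ = σ_i σ_{i+1} ··· σ_j; conversely every such product is fully commutative and this expression is reduced. -/
open Polynomial Finset

/-- The `i`-th Coxeter generator of `W(A_n)`, viewed as the adjacent transposition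
`(i-1, i)` of `Fin (n+1)` (generators are indexed `1 ≤ i ≤ n`). -/
def sig (n i : ℕ) : Equiv.Perm (Fin (n+1)) :=
  Equiv.swap (Fin.ofNat (n+1) (i-1 : ℕ)) (Fin.ofNat (n+1) (i : ℕ))

/-- A word in the generators `σ_1, ..., σ_n`. -/
def IsWord (n : ℕ) (w : List ℕ) : Prop := ∀ i ∈ w, 1 ≤ i ∧ i ≤ n

/-- The product of a word of generators. -/
def wprod (n : ℕ) (w : List ℕ) : Equiv.Perm (Fin (n+1)) := (w.map (sig n)).prod

/-- The Coxeter length of an element of `W(A_n)`. -/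
noncomputable def len (n : ℕ) (g : Equiv.Perm (Fin (n+1))) : ℕ :=
  sInf {k | ∃ w : List ℕ, IsWord n w ∧ wprod n w = g ∧ w.length = k}

/-- A reduced word. -/
def Reduced (n : ℕ) (w : List ℕ) : Prop :=
  IsWord n w ∧ w.length = len n (wprod n w)

/-- One commutation move `... i j ... ↦ ... j i ...` with `|i - j| ≥ 2`. -/
inductive CommMove : List ℕ → List ℕ → Prop
  | swap (a b : List ℕ) (i j : ℕ) (h : i + 2 ≤ j ∨ j + 2 ≤ i) :
      CommMove (a ++ i :: j :: b) (a ++ j :: i :: b)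

/-- `g ∈ W(A_n)` is fully commutative if any two reduced words for `g` are related
by a sequence of commutation moves. -/
def FC (n : ℕ) (g : Equiv.Perm (Fin (n+1))) : Prop :=
  ∀ w w' : List ℕ, Reduced n w → Reduced n w' → wprod n w = g → wprod n w' = g →
    Relation.ReflTransGen CommMove w w'

/-- The data `(i_1,j_1), ..., (i_p,j_p)` of a Stembridge normal form:
`n ≥ j_1 > ⋯ > j_p ≥ 1`, `n ≥ i_1 > ⋯ > i_p ≥ 1`, `i_t ≤ j_t`, `0 ≤ p ≤ n`. -/
def NFData (n : ℕ) (L : List (ℕ × ℕ)) : Prop :=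
  L.length ≤ n ∧ L.Chain' (fun a b => b.1 < a.1 ∧ b.2 < a.2) ∧
    ∀ p ∈ L, 1 ≤ p.1 ∧ p.1 ≤ p.2 ∧ p.2 ≤ n

/-- The word `⌈i_1,j_1⌉⌈i_2,j_2⌉⋯⌈i_p,j_p⌉` where `⌈i,j⌉ = σ_i σ_{i+1} ⋯ σ_j`. -/
def nfWord (L : List (ℕ × ℕ)) : List ℕ :=
  (L.map (fun p => List.Ico p.1 (p.2 + 1))).flatten

/-- `A_n^j`: fully commutative elements whose normal form ends with `σ_j`, i.e. `j_p = j`. -/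
def Anj (n j : ℕ) : Set (Equiv.Perm (Fin (n+1))) :=
  {g | ∃ L : List (ℕ × ℕ), NFData n L ∧ wprod n (nfWord L) = g ∧
       ∃ h : L ≠ [], (L.getLast h).2 = j}

/-- `a_n^j(q) = ∑_{w ∈ A_n^j} q^{l(w)}`. -/
noncomputable def anj (n j : ℕ) : Polynomial ℤ :=
  ∑ g ∈ (Set.toFinite (Anj n j)).toFinset, X ^ len n g

/-- The Poincaré polynomial `a_n(q) = ∑_{w ∈ W^c(A_n)} q^{l(w)}`. -/
noncomputable def apoly (n : ℕ) : Polynomial ℤ :=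
  ∑ g ∈ (Set.toFinite {g : Equiv.Perm (Fin (n+1)) | FC n g}).toFinset, X ^ len n g

/-- The defining conditions for the family `B_j^k`, `1 ≤ k ≤ j`. -/
def Bfam (B : ℕ → ℕ → Polynomial ℤ) : Prop :=
  (∀ j, 1 ≤ j → B j 1 = 1) ∧
  (∀ j, 2 ≤ j → B j j = ∏ t ∈ Finset.Icc 2 j, (1 - X ^ t)) ∧
  (∀ j k, 2 ≤ k → k ≤ j - 1 →
    B j k = B (j-1) k + (1 - X ^ j) * B (j-1) (k-1) - B (j-2) (k-1))

/-- The defining conditions for the family `b_j^k = B_j^{j-k+1}`, `1 ≤ k ≤ j`. -/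
def bfam (b : ℕ → ℕ → Polynomial ℤ) : Prop :=
  (∀ j, 1 ≤ j → b j j = 1) ∧
  (∀ j, 2 ≤ j → b j 1 = ∏ t ∈ Finset.Icc 2 j, (1 - X ^ t)) ∧
  (∀ j k, 2 ≤ k → k ≤ j - 1 →
    b j k = b (j-1) (k-1) + (1 - X ^ j) * b (j-1) k - b (j-2) (k-1))

/-- `ψ(k) = q^2 + ⋯ + q^{k+1}`. -/
noncomputable def psi (k : ℕ) : Polynomial ℤ := ∑ t ∈ Finset.Icc 2 (k+1), X ^ t

/-- `Π(u,v) = ∏_{t=u}^{v} (1 - q^t)` (empty product `1` if `u > v`). -/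
noncomputable def PiPoly (u v : ℕ) : Polynomial ℤ := ∏ t ∈ Finset.Icc u v, (1 - X ^ t)

/-- `ΣΠ(a,b)[l_1, …, l_u]`: the sum over all `(i_1, …, i_u)` with `a ≤ i_1`,
`i_t + l_t ≤ i_{t+1}`, `i_u + l_u - 1 ≤ b`, of `Π(a,b)` where for each `t` the
consecutive factors `(1-q^{i_t})⋯(1-q^{i_t+l_t-1})` are replaced by `-q^{i_t}`. -/
noncomputable def SigmaPi : ℕ → ℕ → List ℕ → Polynomial ℤ
  | a, b, [] => PiPoly a b
  | a, b, l :: ls => ∑ i ∈ Finset.Icc a (b + 1 - (l + ls.sum)),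
      PiPoly a (i-1) * (-X ^ i) * SigmaPi (i + l) b ls

/-- The polynomials `b(j,k,t)` of Theorem 3.3. -/
noncomputable def bjkt (j k t : ℕ) : Polynomial ℤ :=
  if t = k then PiPoly (k+2) j
  else ∑ u ∈ Finset.Icc 1 (min (j-k-1) (k-t)),
    ∑ c ∈ Finset.univ.filter (fun c : Composition (k-t) => c.length = u),
      SigmaPi (t+2) j (c.blocks.map (· + 1))

/-- The product `∏ b_{v_u}^{v_{u+1}}` along a chain `[v_0, v_1, …]`. -/
def chainProd {A : Type*} [CommRing A] (b : ℕ → ℕ → A) : List ℕ → A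
  | [] => 1
  | [_] => 1
  | x :: y :: rest => b x y * chainProd b (y :: rest)

/-- The sum over all strictly decreasing chains `n = v_0 > v_1 > ⋯ > v_s > v_{s+1} = i`
of `∏_{u=0}^{s} b_{v_u}^{v_{u+1}}`; the `s` interior vertices are encoded as an
`s`-element subset of `Ioo i n`, listed in decreasing order. -/
noncomputable def chainSum {A : Type*} [CommRing A] (b : ℕ → ℕ → A) (n i s : ℕ) : A :=
  ∑ T ∈ Finset.powersetCard s (Finset.Ioo i n),
    chainProd b (n :: ((T.sort (· ≤ ·)).reverse ++ [i]))

/-!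
We work in `Equiv.Perm ℕ`, where `σ_k` is the swap of `k - 1` and `k` and `W(A_n)` is the
group of permutations fixing every point above `n`. Right multiplication by `σ_k` changes the
number of inversions by `±1` according as `k` is an ascent or a descent, so the Coxeter length is
the inversion count, and `⌈i,j⌉ h` has `j - i + 1` more inversions than `h` when `h` fixes every
point `≥ j`: normal form words are reduced.

For a normal form `g`, the points `j_t` are exactly those with `g x < x`, and `g j_t = i_t - 1`;
this gives uniqueness. A descent `k` of `g` must be some `j_t`, with all later blocks below
`k - 1`, so `σ_k` can be commuted to the end of the normal form word and removed. Since the last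
letter of a reduced word is a descent, induction shows that every reduced word of `g` is
commutation equivalent to its normal form word.

An element with a `321` pattern has a reduced word containing `k (k+1) k`; the braid move to
`(k+1) k (k+1)` changes the subword in the letters `k, k + 1`, which commutation moves preserve,
so fully commutative elements avoid `321`. A `321`-avoiding `g` is `⌈i,j⌉ h` with `j` the largest
point moved by `g` and `i = g j + 1`; `h` avoids `321` again, and its normal form starts strictly
below `(i, j)` (otherwise `g` contains `321`), which builds the normal form of `g` by induction.
-/

namespace TypeA

/-- Unlike `sig n k`, no reduction modulo `n + 1` is involved. -/
def adjSwap (k : ℕ) : Equiv.Perm ℕ := Equiv.swap (k - 1) k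

def wordProd (w : List ℕ) : Equiv.Perm ℕ := (w.map adjSwap).prod

@[simp] lemma wordProd_nil : wordProd [] = 1 := rfl

@[simp] lemma wordProd_cons (k : ℕ) (w : List ℕ) :
    wordProd (k :: w) = adjSwap k * wordProd w := by
  simp [wordProd]

@[simp] lemma wordProd_append (u v : List ℕ) : wordProd (u ++ v) = wordProd u * wordProd v := by
  simp [wordProd]

lemma adjSwap_apply (k x : ℕ) :
    adjSwap k x = if x = k - 1 then k else if x = k then k - 1 else x := by
  simp [adjSwap, Equiv.swap_apply_def]

lemma adjSwap_apply_of_ne {k x : ℕ} (h₁ : x ≠ k - 1) (h₂ : x ≠ k) : adjSwap k x = x := by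
  simp [adjSwap_apply, h₁, h₂]

lemma adjSwap_apply_sub_one (k : ℕ) : adjSwap k (k - 1) = k := by simp [adjSwap]

lemma adjSwap_apply_self (k : ℕ) : adjSwap k k = k - 1 := by simp [adjSwap]

@[simp] lemma adjSwap_mul_self (k : ℕ) : adjSwap k * adjSwap k = 1 := by simp [adjSwap]

@[simp] lemma mul_adjSwap_mul_adjSwap (g : Equiv.Perm ℕ) (k : ℕ) :
    g * adjSwap k * adjSwap k = g := by
  rw [mul_assoc, adjSwap_mul_self, mul_one]

lemma adjSwap_lt_adjSwap {k x y : ℕ} (hk : 1 ≤ k) (hxy : x < y)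
    (hne : ¬(x = k - 1 ∧ y = k)) : adjSwap k x < adjSwap k y := by
  simp only [adjSwap_apply]
  split_ifs <;> omega

lemma adjSwap_comm {k l : ℕ} (h : k + 2 ≤ l ∨ l + 2 ≤ k) :
    adjSwap k * adjSwap l = adjSwap l * adjSwap k := by
  ext x
  simp only [Equiv.Perm.mul_apply, adjSwap_apply]
  split_ifs <;> omega

lemma adjSwap_braid {k : ℕ} (hk : 1 ≤ k) :
    adjSwap k * adjSwap (k + 1) * adjSwap k = adjSwap (k + 1) * adjSwap k * adjSwap (k + 1) := by
  ext x
  simp only [Equiv.Perm.mul_apply, adjSwap_apply, Nat.add_sub_cancel]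
  split_ifs <;> omega

lemma wordProd_commute_adjSwap {w : List ℕ} {k : ℕ}
    (h : ∀ l ∈ w, l + 2 ≤ k ∨ k + 2 ≤ l) : wordProd w * adjSwap k = adjSwap k * wordProd w := by
  induction w with
  | nil => simp
  | cons a w ih =>
    simp only [List.forall_mem_cons] at h
    rw [wordProd_cons, mul_assoc, ih h.2, ← mul_assoc, adjSwap_comm (by omega), mul_assoc]

lemma wordProd_apply_of_lt {w : List ℕ} {m x : ℕ} (h : ∀ l ∈ w, l ≤ m) (hx : m < x) :
    wordProd w x = x := by
  induction w with
  | nil => simp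
  | cons a w ih =>
    simp only [List.forall_mem_cons] at h
    rw [wordProd_cons, Equiv.Perm.mul_apply, ih h.2, adjSwap_apply_of_ne] <;> omega

lemma isWord_append {n : ℕ} {u v : List ℕ} :
    IsWord n (u ++ v) ↔ IsWord n u ∧ IsWord n v := by
  simp only [IsWord, List.forall_mem_append]

lemma isWord_singleton {n k : ℕ} : IsWord n [k] ↔ 1 ≤ k ∧ k ≤ n := by
  simp [IsWord]

def FixedAbove (n : ℕ) (g : Equiv.Perm ℕ) : Prop := ∀ x, n < x → g x = x

lemma FixedAbove.apply_le {n x : ℕ} {g : Equiv.Perm ℕ} (hg : FixedAbove n g) (hx : x ≤ n) :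
    g x ≤ n := by
  by_contra! h
  have := g.injective (hg _ h)
  omega

lemma FixedAbove.mul {n : ℕ} {g h : Equiv.Perm ℕ} (hg : FixedAbove n g) (hh : FixedAbove n h) :
    FixedAbove n (g * h) := fun x hx => by simp [hh x hx, hg x hx]

lemma FixedAbove.mul_adjSwap {n k : ℕ} {g : Equiv.Perm ℕ} (hg : FixedAbove n g) (hk : k ≤ n) :
    FixedAbove n (g * adjSwap k) :=
  hg.mul fun _ hx => adjSwap_apply_of_ne (by omega) (by omega)

lemma fixedAbove_wordProd {n : ℕ} {w : List ℕ} (hw : IsWord n w) : FixedAbove n (wordProd w) :=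
  fun _ hx => wordProd_apply_of_lt (fun l hl => (hw l hl).2) hx

def inversions (n : ℕ) (g : Equiv.Perm ℕ) : Finset (ℕ × ℕ) :=
  (range (n + 1) ×ˢ range (n + 1)).filter fun p => p.1 < p.2 ∧ g p.2 < g p.1

def invCount (n : ℕ) (g : Equiv.Perm ℕ) : ℕ := (inversions n g).card

lemma mem_inversions {n : ℕ} {g : Equiv.Perm ℕ} {p : ℕ × ℕ} :
    p ∈ inversions n g ↔ p.1 ≤ n ∧ p.2 ≤ n ∧ p.1 < p.2 ∧ g p.2 < g p.1 := by
  simp only [inversions, mem_filter, mem_product, mem_range]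
  omega

@[simp] lemma invCount_one (n : ℕ) : invCount n 1 = 0 := by
  rw [invCount, inversions, card_eq_zero, filter_eq_empty_iff]
  intro p _
  simp only [Equiv.Perm.one_apply]
  omega

lemma invCount_mul_adjSwap_of_lt {n k : ℕ} {g : Equiv.Perm ℕ} (hk : 1 ≤ k) (hkn : k ≤ n)
    (hasc : g (k - 1) < g k) : invCount n (g * adjSwap k) = invCount n g + 1 := by
  set q : ℕ × ℕ := (k - 1, k)
  have hq : q ∈ inversions n (g * adjSwap k) := by
    rw [mem_inversions]
    simp only [Equiv.Perm.mul_apply, q, adjSwap_apply_sub_one, adjSwap_apply_self]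
    exact ⟨by omega, hkn, by omega, hasc⟩
  have hq' : q ∉ inversions n g := by simp [mem_inversions, q]; omega
  -- Away from the pair `(k-1, k)`, swapping both coordinates by `σ_k` matches the inversions.
  have key : ∀ (h : Equiv.Perm ℕ) (p : ℕ × ℕ), p ∈ (inversions n h).erase q →
      (adjSwap k p.1, adjSwap k p.2) ∈ (inversions n (h * adjSwap k)).erase q := by
    rintro h ⟨x, y⟩ hp
    simp only [mem_erase, mem_inversions, q, ne_eq, Prod.mk.injEq] at hp ⊢
    obtain ⟨hne, hx, hy, hxy, hinv⟩ := hp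
    simp only [Equiv.Perm.mul_apply, adjSwap, Equiv.swap_apply_self]
    refine ⟨?_, ?_, ?_, adjSwap_lt_adjSwap hk hxy hne, hinv⟩ <;>
      simp only [Equiv.swap_apply_def] <;> split_ifs <;> omega
  have hcard :
      ((inversions n (g * adjSwap k)).erase q).card = ((inversions n g).erase q).card := by
    refine card_nbij' (fun p => (adjSwap k p.1, adjSwap k p.2))
      (fun p => (adjSwap k p.1, adjSwap k p.2)) (fun p hp => ?_) (fun p hp => key g p hp)
      (fun p _ => by simp [adjSwap]) (fun p _ => by simp [adjSwap])
    simpa [and_comm] using key (g * adjSwap k) p hp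
  rw [invCount, ← card_erase_add_one hq, hcard, erase_eq_of_notMem hq', invCount]

lemma invCount_mul_adjSwap_of_gt {n k : ℕ} {g : Equiv.Perm ℕ} (hk : 1 ≤ k) (hkn : k ≤ n)
    (hdesc : g k < g (k - 1)) : invCount n (g * adjSwap k) + 1 = invCount n g := by
  have := invCount_mul_adjSwap_of_lt hk hkn (g := g * adjSwap k)
    (by simpa [adjSwap_apply_sub_one, adjSwap_apply_self] using hdesc)
  rwa [mul_adjSwap_mul_adjSwap, eq_comm] at this

lemma FixedAbove.inv {n : ℕ} {g : Equiv.Perm ℕ} (hg : FixedAbove n g) : FixedAbove n g⁻¹ :=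
  fun x hx => by rw [Equiv.Perm.inv_eq_iff_eq, hg x hx]

lemma FixedAbove.mono {m n : ℕ} {g : Equiv.Perm ℕ} (hg : FixedAbove m g) (hmn : m ≤ n) :
    FixedAbove n g :=
  fun x hx => hg x (by omega)

lemma FixedAbove.apply_lt_of_ne {j : ℕ} {g : Equiv.Perm ℕ} (hg : FixedAbove j g)
    (hne : g j ≠ j) : g j < j :=
  lt_of_le_of_ne (hg.apply_le le_rfl) hne

lemma FixedAbove.inv_apply_lt_of_ne {j : ℕ} {g : Equiv.Perm ℕ} (hg : FixedAbove j g)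
    (hne : g j ≠ j) : g⁻¹ j < j :=
  hg.inv.apply_lt_of_ne fun h => hne (by simpa using congrArg g h.symm)

lemma FixedAbove.le_of_apply_lt {n y z : ℕ} {g : Equiv.Perm ℕ} (hg : FixedAbove n g)
    (hyz : y < z) (h : g z < g y) : z ≤ n := by
  by_contra! hz
  rw [hg z hz] at h
  by_cases hy : y ≤ n
  · have := hg.apply_le hy
    omega
  · rw [hg y (by omega)] at h
    omega

lemma exists_max_moved {n : ℕ} {g : Equiv.Perm ℕ} (hg : FixedAbove n g) (h1 : g ≠ 1) :
    ∃ j ≤ n, g j ≠ j ∧ FixedAbove j g := by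
  classical
  obtain ⟨x, hx⟩ : ∃ x, g x ≠ x := by
    by_contra! h
    exact h1 (Equiv.ext h)
  have hxn : x ≤ n := by
    by_contra! h
    exact hx (hg x h)
  refine ⟨Nat.findGreatest (fun x => g x ≠ x) n, Nat.findGreatest_le n,
    Nat.findGreatest_spec (P := fun x => g x ≠ x) hxn hx, fun y hy => ?_⟩
  by_cases hyn : y ≤ n
  · by_contra h
    exact Nat.findGreatest_is_greatest hy hyn h
  · exact hg y (by omega)

lemma exists_descent_between {g : Equiv.Perm ℕ} {a b : ℕ} (hab : a < b) (h : g b < g a) :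
    ∃ k, a < k ∧ k ≤ b ∧ g k < g (k - 1) := by
  by_contra! hmono
  have : ∀ m, a ≤ m → m ≤ b → g a ≤ g m := by
    intro m ham
    induction m, ham using Nat.le_induction with
    | base => exact fun _ => le_rfl
    | succ m ham ih =>
      exact fun hmb => (ih (by omega)).trans (by simpa using hmono (m + 1) (by omega) hmb)
  exact absurd (this b hab.le le_rfl) (by omega)

lemma exists_descent {n : ℕ} {g : Equiv.Perm ℕ} (hg : FixedAbove n g) (h1 : g ≠ 1) :
    ∃ k, 1 ≤ k ∧ k ≤ n ∧ g k < g (k - 1) := by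
  obtain ⟨j, hjn, hgj, hj⟩ := exists_max_moved hg h1
  have hinv := hj.inv_apply_lt_of_ne hgj
  obtain ⟨k, hk, hkj, hdesc⟩ := exists_descent_between (g := g) hinv
    (by simpa using hj.apply_lt_of_ne hgj)
  exact ⟨k, by omega, by omega, hdesc⟩

def IsReducedWord (n : ℕ) (w : List ℕ) : Prop :=
  IsWord n w ∧ w.length = invCount n (wordProd w)

lemma invCount_wordProd_le_length {n : ℕ} {w : List ℕ} (hw : IsWord n w) :
    invCount n (wordProd w) ≤ w.length := by
  induction w using List.reverseRecOn with
  | nil => simp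
  | append_singleton u k ih =>
    rw [isWord_append, isWord_singleton] at hw
    obtain ⟨hu, hk, hkn⟩ := hw
    rw [wordProd_append, wordProd_cons, wordProd_nil, mul_one, List.length_append,
      List.length_singleton]
    rcases lt_trichotomy (wordProd u (k - 1)) (wordProd u k) with h | h | h
    · rw [invCount_mul_adjSwap_of_lt hk hkn h]
      exact Nat.add_le_add_right (ih hu) 1
    · exact absurd ((wordProd u).injective h) (by omega)
    · have := invCount_mul_adjSwap_of_gt hk hkn h
      have := ih hu
      omega

lemma IsReducedWord.append_descent {n k : ℕ} {u : List ℕ} {g : Equiv.Perm ℕ}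
    (hu : IsReducedWord n u) (hug : wordProd u = g * adjSwap k) (hk : 1 ≤ k) (hkn : k ≤ n)
    (hdesc : g k < g (k - 1)) : IsReducedWord n (u ++ [k]) ∧ wordProd (u ++ [k]) = g := by
  have hg : wordProd (u ++ [k]) = g := by simp [hug]
  refine ⟨⟨isWord_append.2 ⟨hu.1, isWord_singleton.2 ⟨hk, hkn⟩⟩, ?_⟩, hg⟩
  have := invCount_mul_adjSwap_of_gt hk hkn hdesc
  rw [hg, List.length_append, hu.2, hug, List.length_singleton, this]

lemma IsReducedWord.of_append_singleton {n k : ℕ} {u : List ℕ}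
    (h : IsReducedWord n (u ++ [k])) :
    IsReducedWord n u ∧ wordProd (u ++ [k]) k < wordProd (u ++ [k]) (k - 1) := by
  obtain ⟨hw, hlen⟩ := h
  rw [isWord_append, isWord_singleton] at hw
  obtain ⟨hu, hk, hkn⟩ := hw
  set g := wordProd (u ++ [k])
  have hug : wordProd u = g * adjSwap k := by simp [g]
  have hle := invCount_wordProd_le_length hu
  rw [hug] at hle
  rw [List.length_append, List.length_singleton] at hlen
  rcases lt_trichotomy (g (k - 1)) (g k) with h | h | h
  · have := invCount_mul_adjSwap_of_lt hk hkn h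
    omega
  · exact absurd (g.injective h) (by omega)
  · have := invCount_mul_adjSwap_of_gt hk hkn h
    exact ⟨⟨hu, by rw [hug]; omega⟩, h⟩

lemma exists_isReducedWord {n : ℕ} {g : Equiv.Perm ℕ} (hg : FixedAbove n g) :
    ∃ w, IsReducedWord n w ∧ wordProd w = g := by
  induction hN : invCount n g using Nat.strong_induction_on generalizing g with
  | _ N ih =>
    by_cases h1 : g = 1
    · exact ⟨[], ⟨fun _ h => by simp at h, by simp⟩, by simp [h1]⟩
    obtain ⟨k, hk, hkn, hdesc⟩ := exists_descent hg h1
    have hlt := invCount_mul_adjSwap_of_gt hk hkn hdesc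
    obtain ⟨u, hu, hug⟩ := ih _ (by omega) (hg.mul_adjSwap hkn) rfl
    exact ⟨u ++ [k], hu.append_descent hug hk hkn hdesc⟩

noncomputable def natPerm (n : ℕ) : Equiv.Perm (Fin (n + 1)) →* Equiv.Perm ℕ :=
  Equiv.Perm.extendDomainHom (p := fun x : ℕ => x < n + 1) Fin.equivSubtype

lemma natPerm_injective (n : ℕ) : Function.Injective (natPerm n) :=
  Equiv.Perm.extendDomainHom_injective _

lemma natPerm_apply_of_lt {n x : ℕ} (g : Equiv.Perm (Fin (n + 1))) (hx : x < n + 1) :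
    natPerm n g x = g ⟨x, hx⟩ := by
  rw [natPerm]
  simpa [Fin.equivSubtype] using
    Equiv.Perm.extendDomain_apply_subtype (p := fun x : ℕ => x < n + 1) g Fin.equivSubtype hx

lemma fixedAbove_natPerm (n : ℕ) (g : Equiv.Perm (Fin (n + 1))) : FixedAbove n (natPerm n g) :=
  fun _ hx => Equiv.Perm.extendDomain_apply_not_subtype g Fin.equivSubtype (by simp; omega)

lemma natPerm_sig {n k : ℕ} (hk : 1 ≤ k) (hkn : k ≤ n) : natPerm n (sig n k) = adjSwap k := by
  ext x
  rcases lt_or_ge x (n + 1) with hx | hx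
  · rw [natPerm_apply_of_lt _ hx, sig, adjSwap, Equiv.swap_apply_def, Equiv.swap_apply_def]
    simp only [Fin.ext_iff, Fin.val_ofNat, Nat.mod_eq_of_lt (show k - 1 < n + 1 by omega),
      Nat.mod_eq_of_lt (show k < n + 1 by omega)]
    split_ifs <;> simp <;> omega
  · rw [fixedAbove_natPerm n _ x (by omega), adjSwap_apply_of_ne (by omega) (by omega)]

lemma natPerm_wprod {n : ℕ} {w : List ℕ} (hw : IsWord n w) :
    natPerm n (wprod n w) = wordProd w := by
  induction w with
  | nil => simp [wprod]
  | cons k w ih =>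
    simp only [IsWord, List.forall_mem_cons] at hw
    simp only [wprod, List.map_cons, List.prod_cons, map_mul] at ih ⊢
    rw [natPerm_sig hw.1.1 hw.1.2, ih hw.2, wordProd_cons]

lemma wprod_eq_iff {n : ℕ} {w : List ℕ} (hw : IsWord n w) (g : Equiv.Perm (Fin (n + 1))) :
    wprod n w = g ↔ wordProd w = natPerm n g := by
  rw [← natPerm_wprod hw, (natPerm_injective n).eq_iff]

lemma len_eq_invCount {n : ℕ} (g : Equiv.Perm (Fin (n + 1))) :
    len n g = invCount n (natPerm n g) := by
  obtain ⟨w, ⟨hw, hlen⟩, hwg⟩ := exists_isReducedWord (fixedAbove_natPerm n g)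
  have hmem : invCount n (natPerm n g) ∈
      {k | ∃ w : List ℕ, IsWord n w ∧ wprod n w = g ∧ w.length = k} :=
    ⟨w, hw, (wprod_eq_iff hw g).2 hwg, hwg ▸ hlen⟩
  refine le_antisymm (Nat.sInf_le hmem) (le_csInf ⟨_, hmem⟩ ?_)
  rintro _ ⟨v, hv, hvg, rfl⟩
  exact (wprod_eq_iff hv g).1 hvg ▸ invCount_wordProd_le_length hv

lemma reduced_iff_isReducedWord {n : ℕ} {w : List ℕ} : Reduced n w ↔ IsReducedWord n w := by
  refine and_congr_right fun hw => ?_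
  rw [len_eq_invCount, natPerm_wprod hw]

lemma invCount_inv {n : ℕ} {g : Equiv.Perm ℕ} (hg : FixedAbove n g) :
    invCount n g⁻¹ = invCount n g := by
  refine card_nbij' (fun p => (g⁻¹ p.2, g⁻¹ p.1)) (fun p => (g p.2, g p.1))
    (fun p hp => ?_) (fun p hp => ?_) (fun p _ => by simp) (fun p _ => by simp)
  · rw [mem_coe, mem_inversions] at hp ⊢
    simp only [Equiv.Perm.coe_inv, Equiv.apply_symm_apply]
    exact ⟨hg.inv.apply_le hp.2.1, hg.inv.apply_le hp.1, hp.2.2.2, hp.2.2.1⟩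
  · rw [mem_coe, mem_inversions] at hp ⊢
    simp only [Equiv.Perm.coe_inv, Equiv.symm_apply_apply]
    exact ⟨hg.apply_le hp.2.1, hg.apply_le hp.1, hp.2.2.2, hp.2.2.1⟩

lemma invCount_adjSwap_mul_of_lt {n k : ℕ} {g : Equiv.Perm ℕ} (hg : FixedAbove n g)
    (hk : 1 ≤ k) (hkn : k ≤ n) (hasc : g⁻¹ (k - 1) < g⁻¹ k) :
    invCount n (adjSwap k * g) = invCount n g + 1 := by
  have hsg : FixedAbove n (adjSwap k * g) :=
    FixedAbove.mul (fun _ hx => adjSwap_apply_of_ne (by omega) (by omega)) hg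
  rw [← invCount_inv hsg, ← invCount_inv hg, mul_inv_rev, adjSwap, Equiv.swap_inv, ← adjSwap,
    invCount_mul_adjSwap_of_lt hk hkn hasc]

/-- `⌈i, j⌉` cycles `i - 1 → i → ⋯ → j → i - 1`; for `i = j + 1` it is the empty product. -/
lemma wordProd_Ico_apply {i j : ℕ} (hi : 1 ≤ i) (hij : i ≤ j + 1) (x : ℕ) :
    wordProd (List.Ico i (j + 1)) x =
      if x = j then i - 1 else if i - 1 ≤ x ∧ x < j then x + 1 else x := by
  induction hd : j + 1 - i generalizing i with
  | zero =>
    obtain rfl : i = j + 1 := by omega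
    simp only [List.Ico.self_empty, wordProd_nil, Equiv.Perm.one_apply]
    split_ifs <;> omega
  | succ d ih =>
    rw [List.Ico.eq_cons (by omega), wordProd_cons, Equiv.Perm.mul_apply,
      ih (by omega) (by omega) (by omega), adjSwap_apply]
    split_ifs <;> omega

lemma wordProd_Ico_lt_iff {i j a b : ℕ} (hi : 1 ≤ i) (hij : i ≤ j) (ha : a ≠ j)
    (hb : b ≠ j) : wordProd (List.Ico i (j + 1)) a < wordProd (List.Ico i (j + 1)) b ↔ a < b := by
  rw [wordProd_Ico_apply hi (by omega), wordProd_Ico_apply hi (by omega)]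
  split_ifs <;> omega

lemma invCount_wordProd_Ico_mul {n i j : ℕ} {h : Equiv.Perm ℕ} (hi : 1 ≤ i) (hij : i ≤ j + 1)
    (hjn : j ≤ n) (hh : FixedAbove (j - 1) h) :
    invCount n (wordProd (List.Ico i (j + 1)) * h) = (j + 1 - i) + invCount n h := by
  induction hd : j + 1 - i generalizing i with
  | zero => simp [show i = j + 1 by omega]
  | succ d ih =>
    set g := wordProd (List.Ico (i + 1) (j + 1)) * h
    have hC := wordProd_Ico_apply (i := i + 1) (j := j) (by omega) (by omega)
    have hgj : g j = i := by
      simp only [g, Equiv.Perm.mul_apply, hh j (by omega), hC]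
      simp
    have hgi : g (h⁻¹ (i - 1)) = i - 1 := by
      simp only [g, Equiv.Perm.mul_apply, Equiv.Perm.coe_inv, Equiv.apply_symm_apply, hC]
      split_ifs <;> omega
    have hhi : h⁻¹ (i - 1) < j := by
      by_contra! hc
      have := h⁻¹.injective (hh.inv (h⁻¹ (i - 1)) (by omega))
      omega
    have hg : FixedAbove n g :=
      (fixedAbove_wordProd fun l hl => by simp at hl; omega).mul fun x hx => hh x (by omega)
    have hasc : g⁻¹ (i - 1) < g⁻¹ i := by
      rwa [Equiv.Perm.inv_eq_iff_eq.2 hgi.symm, Equiv.Perm.inv_eq_iff_eq.2 hgj.symm]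
    rw [List.Ico.eq_cons (by omega), wordProd_cons, mul_assoc,
      invCount_adjSwap_mul_of_lt hg hi (by omega) hasc, ih (by omega) (by omega) (by omega)]
    omega

lemma nfData_iff {n : ℕ} {L : List (ℕ × ℕ)} : NFData n L ↔
    L.Pairwise (fun a b => b.1 < a.1 ∧ b.2 < a.2) ∧ ∀ p ∈ L, 1 ≤ p.1 ∧ p.1 ≤ p.2 ∧ p.2 ≤ n := by
  let R : ℕ × ℕ → ℕ × ℕ → Prop := fun a b => b.1 < a.1 ∧ b.2 < a.2
  have : Trans R R R := ⟨fun h₁ h₂ => ⟨h₂.1.trans h₁.1, h₂.2.trans h₁.2⟩⟩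
  refine ⟨fun h => ⟨List.isChain_iff_pairwise.1 h.2.1, h.2.2⟩,
    fun ⟨hpw, hb⟩ => ⟨?_, List.isChain_iff_pairwise.2 hpw, hb⟩⟩
  -- the second coordinates are distinct elements of `[1, n]`
  have hsnd : (L.map Prod.snd).Pairwise (· > ·) := List.pairwise_map.2 (hpw.imp And.right)
  calc L.length = (L.map Prod.snd).toFinset.card := by
        rw [List.toFinset_card_of_nodup hsnd.nodup, List.length_map]
    _ ≤ (Icc 1 n).card := card_le_card fun x hx => by
        obtain ⟨p, hp, rfl⟩ := List.mem_map.1 (List.mem_toFinset.1 hx)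
        have := hb p hp
        simp only [mem_Icc]
        omega
    _ = n := by simp

lemma nfData_cons_iff {n : ℕ} {p : ℕ × ℕ} {L : List (ℕ × ℕ)} : NFData n (p :: L) ↔
    (1 ≤ p.1 ∧ p.1 ≤ p.2 ∧ p.2 ≤ n) ∧ (∀ q ∈ L, q.1 < p.1 ∧ q.2 < p.2) ∧ NFData n L := by
  simp only [nfData_iff, List.pairwise_cons, List.forall_mem_cons]
  tauto

@[simp] lemma nfWord_nil : nfWord [] = [] := rfl

lemma nfWord_cons (i j : ℕ) (L : List (ℕ × ℕ)) :
    nfWord ((i, j) :: L) = List.Ico i (j + 1) ++ nfWord L := by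
  simp [nfWord]

lemma nfWord_append (A B : List (ℕ × ℕ)) : nfWord (A ++ B) = nfWord A ++ nfWord B := by
  simp [nfWord]

lemma mem_nfWord {l : ℕ} {L : List (ℕ × ℕ)} : l ∈ nfWord L ↔ ∃ p ∈ L, p.1 ≤ l ∧ l ≤ p.2 := by
  simp only [nfWord, List.mem_flatten, List.mem_map, exists_exists_and_eq_and, List.Ico.mem]
  exact exists_congr fun p => and_congr_right fun _ => by omega

lemma isWord_nfWord {n : ℕ} {L : List (ℕ × ℕ)} (hL : NFData n L) : IsWord n (nfWord L) := by
  intro l hl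
  obtain ⟨p, hp, hl⟩ := mem_nfWord.1 hl
  have := (nfData_iff.1 hL).2 p hp
  omega

lemma wordProd_nfWord_apply_of_lt {L : List (ℕ × ℕ)} {m x : ℕ} (h : ∀ p ∈ L, p.2 ≤ m)
    (hx : m < x) : wordProd (nfWord L) x = x :=
  wordProd_apply_of_lt (fun l hl => by
    obtain ⟨p, hp, hl⟩ := mem_nfWord.1 hl
    exact hl.2.trans (h p hp)) hx

lemma fixedAbove_wordProd_nfWord_tail {n i j : ℕ} {L : List (ℕ × ℕ)}
    (hL : NFData n ((i, j) :: L)) : FixedAbove (j - 1) (wordProd (nfWord L)) :=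
  fun _ hx => wordProd_nfWord_apply_of_lt
    (fun q hq => by have := (nfData_cons_iff.1 hL).2.1 q hq; omega) hx

lemma invCount_wordProd_nfWord {n : ℕ} {L : List (ℕ × ℕ)} (hL : NFData n L) :
    invCount n (wordProd (nfWord L)) = (nfWord L).length := by
  induction L with
  | nil => simp
  | cons p L ih =>
    obtain ⟨i, j⟩ := p
    have hb := (nfData_cons_iff.1 hL).1
    rw [nfWord_cons, wordProd_append, invCount_wordProd_Ico_mul hb.1 (by omega) hb.2.2
      (fixedAbove_wordProd_nfWord_tail hL), ih (nfData_cons_iff.1 hL).2.2, List.length_append,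
      List.Ico.length]

lemma isReducedWord_nfWord {n : ℕ} {L : List (ℕ × ℕ)} (hL : NFData n L) :
    IsReducedWord n (nfWord L) :=
  ⟨isWord_nfWord hL, (invCount_wordProd_nfWord hL).symm⟩

section Values

variable {n : ℕ} {L : List (ℕ × ℕ)}

lemma wordProd_nfWord_apply_snd (hL : NFData n L) {p : ℕ × ℕ} (hp : p ∈ L) :
    wordProd (nfWord L) p.2 = p.1 - 1 := by
  induction L with
  | nil => simp at hp
  | cons q L ih =>
    obtain ⟨i, j⟩ := q
    obtain ⟨hb, hdom, hL'⟩ := nfData_cons_iff.1 hL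
    rw [nfWord_cons, wordProd_append, Equiv.Perm.mul_apply, wordProd_Ico_apply hb.1 (by omega)]
    rcases List.mem_cons.1 hp with rfl | hp
    · simp [fixedAbove_wordProd_nfWord_tail hL j (by omega)]
    · have := hdom p hp
      have := (nfData_iff.1 hL').2 p hp
      rw [ih hL' hp]
      split_ifs <;> omega

lemma le_wordProd_nfWord_apply (hL : NFData n L) {x : ℕ} (hx : x ∉ L.map Prod.snd) :
    x ≤ wordProd (nfWord L) x := by
  induction L with
  | nil => simp
  | cons q L ih =>
    obtain ⟨i, j⟩ := q
    obtain ⟨hb, -, hL'⟩ := nfData_cons_iff.1 hL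
    simp only [List.map_cons, List.mem_cons, not_or] at hx
    have hne : wordProd (nfWord L) x ≠ j := fun h => hx.1 <| (wordProd (nfWord L)).injective <|
      h.trans (fixedAbove_wordProd_nfWord_tail hL j (by omega)).symm
    have := ih hL' hx.2
    rw [nfWord_cons, wordProd_append, Equiv.Perm.mul_apply, wordProd_Ico_apply hb.1 (by omega)]
    split_ifs <;> omega

lemma wordProd_nfWord_lt_of_notMem (hL : NFData n L) {x y : ℕ} (hxy : x < y)
    (hx : x ∉ L.map Prod.snd) (hy : y ∉ L.map Prod.snd) :
    wordProd (nfWord L) x < wordProd (nfWord L) y := by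
  induction L with
  | nil => simpa using hxy
  | cons q L ih =>
    obtain ⟨i, j⟩ := q
    obtain ⟨hb, -, hL'⟩ := nfData_cons_iff.1 hL
    simp only [List.map_cons, List.mem_cons, not_or] at hx hy
    have hfix := fixedAbove_wordProd_nfWord_tail hL j (by omega)
    have hne : ∀ z, z ≠ j → wordProd (nfWord L) z ≠ j := fun z hz h =>
      hz ((wordProd (nfWord L)).injective (h.trans hfix.symm))
    rw [nfWord_cons, wordProd_append, Equiv.Perm.mul_apply, Equiv.Perm.mul_apply,
      wordProd_Ico_lt_iff hb.1 hb.2.1 (hne x hx.1) (hne y hy.1)]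
    exact ih hL' hx.2 hy.2

lemma mem_map_snd_iff (hL : NFData n L) {x : ℕ} :
    x ∈ L.map Prod.snd ↔ wordProd (nfWord L) x < x := by
  refine ⟨fun hx => ?_, fun hx => by_contra fun h => (le_wordProd_nfWord_apply hL h).not_gt hx⟩
  obtain ⟨p, hp, rfl⟩ := List.mem_map.1 hx
  have := (nfData_iff.1 hL).2 p hp
  rw [wordProd_nfWord_apply_snd hL hp]
  omega

lemma eq_map_map_snd (hL : NFData n L) :
    L = (L.map Prod.snd).map fun x => (wordProd (nfWord L) x + 1, x) := by
  conv_lhs => rw [← List.map_id L]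
  rw [List.map_map]
  refine List.map_congr_left fun p hp => ?_
  have := (nfData_iff.1 hL).2 p hp
  simp only [id, Function.comp, wordProd_nfWord_apply_snd hL hp]
  ext <;> simp only
  omega

lemma pairwise_gt_map_snd (hL : NFData n L) : (L.map Prod.snd).Pairwise (· > ·) :=
  List.pairwise_map.2 ((nfData_iff.1 hL).1.imp And.right)

end Values

lemma nfData_eq_of_wordProd_eq {n : ℕ} {L L' : List (ℕ × ℕ)} (hL : NFData n L)
    (hL' : NFData n L') (h : wordProd (nfWord L) = wordProd (nfWord L')) : L = L' := by
  have : L.map Prod.snd = L'.map Prod.snd :=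
    (pairwise_gt_map_snd hL).eq_of_mem_iff (pairwise_gt_map_snd hL') fun x => by
      rw [mem_map_snd_iff hL, mem_map_snd_iff hL', h]
  rw [eq_map_map_snd hL, eq_map_map_snd hL', this, h]

lemma CommMove.symm {u v : List ℕ} (h : CommMove u v) : CommMove v u := by
  obtain ⟨a, b, i, j, hij⟩ := h
  exact CommMove.swap a b j i hij.symm

lemma CommMove.append_right {u v : List ℕ} (y : List ℕ) (h : CommMove u v) :
    CommMove (u ++ y) (v ++ y) := by
  obtain ⟨a, b, i, j, hij⟩ := h
  simpa using CommMove.swap a (b ++ y) i j hij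

lemma commEquiv_symm {u v : List ℕ} (h : Relation.ReflTransGen CommMove u v) :
    Relation.ReflTransGen CommMove v u :=
  have : Std.Symm CommMove := ⟨fun _ _ => CommMove.symm⟩
  Std.Symm.symm _ _ h

lemma commEquiv_append_right {u v : List ℕ} (y : List ℕ) (h : Relation.ReflTransGen CommMove u v) :
    Relation.ReflTransGen CommMove (u ++ y) (v ++ y) :=
  Relation.ReflTransGen.lift (· ++ y) (fun _ _ => CommMove.append_right y) _ _ h

lemma commEquiv_move_front {k : ℕ} (x v : List ℕ) (hv : ∀ l ∈ v, l + 2 ≤ k ∨ k + 2 ≤ l) :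
    Relation.ReflTransGen CommMove (x ++ v ++ [k]) (x ++ k :: v) := by
  induction v generalizing x with
  | nil => simpa using Relation.ReflTransGen.refl
  | cons a v ih =>
    simp only [List.forall_mem_cons] at hv
    have h₁ := ih (x ++ [a]) hv.2
    have h₂ := CommMove.swap x v a k (by omega)
    simp only [List.append_assoc, List.cons_append] at h₁ h₂ ⊢
    exact h₁.tail h₂

lemma wordProd_append_cons_of_far {k : ℕ} (u v : List ℕ) (hv : ∀ l ∈ v, l + 2 ≤ k ∨ k + 2 ≤ l) :
    wordProd (u ++ k :: v) = wordProd (u ++ v) * adjSwap k := by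
  simp only [wordProd_append, wordProd_cons, mul_assoc, wordProd_commute_adjSwap hv]

section Descents

variable {n : ℕ} {L : List (ℕ × ℕ)}

lemma exists_eq_append_of_descent (hL : NFData n L) {k : ℕ} (hk : 1 ≤ k)
    (hdesc : wordProd (nfWord L) k < wordProd (nfWord L) (k - 1)) :
    ∃ A i B, L = A ++ (i, k) :: B ∧ ∀ q ∈ B, q.2 + 2 ≤ k := by
  have hkL : k ∈ L.map Prod.snd := by
    by_contra hk'
    have := le_wordProd_nfWord_apply hL hk'
    by_cases hk1 : k - 1 ∈ L.map Prod.snd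
    · have := (mem_map_snd_iff hL).1 hk1
      omega
    · have := wordProd_nfWord_lt_of_notMem hL (by omega) hk1 hk'
      omega
  obtain ⟨⟨i, k'⟩, hp, hk'⟩ := List.mem_map.1 hkL
  dsimp only at hk'
  subst k'
  obtain ⟨A, B, rfl⟩ := List.append_of_mem hp
  refine ⟨A, i, B, rfl, fun q hq => ?_⟩
  have hpw := (nfData_iff.1 hL).1
  simp only [List.pairwise_append, List.pairwise_cons] at hpw
  have hqi := hpw.2.1.1 q hq
  have hgk := wordProd_nfWord_apply_snd hL (p := (i, k)) (by simp)
  have hgq := wordProd_nfWord_apply_snd hL (p := q) (by simp [hq])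
  have := ((nfData_iff.1 hL).2 q (by simp [hq])).1
  by_contra
  rw [show q.2 = k - 1 by omega] at hgq
  simp only at hgk
  omega

lemma nfData_of_sublist {L' : List (ℕ × ℕ)} (hL : NFData n L) (h : L'.Sublist L) : NFData n L' := by
  rw [nfData_iff] at hL ⊢
  exact ⟨hL.1.sublist h, fun p hp => hL.2 p (h.subset hp)⟩

lemma nfData_lower_block {A B : List (ℕ × ℕ)} {i k : ℕ} (hL : NFData n (A ++ (i, k) :: B))
    (hik : i < k) (hB : ∀ q ∈ B, q.2 + 2 ≤ k) : NFData n (A ++ (i, k - 1) :: B) := by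
  obtain ⟨hpw, hb⟩ := nfData_iff.1 hL
  have hik' := hb (i, k) (by simp)
  simp only [List.pairwise_append, List.pairwise_cons] at hpw
  refine nfData_iff.2 ⟨?_, fun p hp => ?_⟩
  · simp only [List.pairwise_append, List.pairwise_cons]
    refine ⟨hpw.1, ⟨fun q hq => ?_, hpw.2.1.2⟩, fun a ha b hb' => ?_⟩
    · have := hpw.2.1.1 q hq
      have := hB q hq
      omega
    · rcases List.mem_cons.1 hb' with rfl | hb'
      · have := hpw.2.2 a ha (i, k) (by simp)
        simp only at this ⊢
        omega
      · exact hpw.2.2 a ha b (by simp [hb'])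
  · simp only [List.mem_append, List.mem_cons] at hp
    rcases hp with hp | rfl | hp
    · exact hb p (by simp [hp])
    · simp only at hik' ⊢
      omega
    · exact hb p (by simp [hp])

/-- Deleting the descent `σ_k` at the end of `⌈i,k⌉` gives a normal form again (`⌈i,k-1⌉`
disappears when `i = k`); the blocks after it commute with `σ_k`. -/
lemma exists_nfData_of_descent (hL : NFData n L) {k : ℕ} (hk : 1 ≤ k)
    (hdesc : wordProd (nfWord L) k < wordProd (nfWord L) (k - 1)) :
    ∃ L' u v, NFData n L' ∧ nfWord L' = u ++ v ∧ nfWord L = u ++ k :: v ∧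
      ∀ l ∈ v, l + 2 ≤ k := by
  obtain ⟨A, i, B, rfl, hB⟩ := exists_eq_append_of_descent hL hk hdesc
  have hBw : ∀ l ∈ nfWord B, l + 2 ≤ k := fun l hl => by
    obtain ⟨q, hq, hl⟩ := mem_nfWord.1 hl
    have := hB q hq
    omega
  have hik : i ≤ k := ((nfData_iff.1 hL).2 (i, k) (by simp)).2.1
  have hword : nfWord (A ++ (i, k) :: B) = (nfWord A ++ List.Ico i k) ++ k :: nfWord B := by
    simp [nfWord_append, nfWord_cons, List.Ico.succ_top hik]
  rcases hik.eq_or_lt with rfl | hik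
  · exact ⟨A ++ B, _, _, nfData_of_sublist hL (by simp), by simp [nfWord_append], hword, hBw⟩
  · refine ⟨A ++ (i, k - 1) :: B, _, _, nfData_lower_block hL hik hB, ?_, hword, hBw⟩
    simp [nfWord_append, nfWord_cons, Nat.sub_add_cancel hk]

end Descents

theorem commEquiv_nfWord_of_isReducedWord {n : ℕ} {L : List (ℕ × ℕ)} {w : List ℕ}
    (hL : NFData n L) (hw : IsReducedWord n w) (hwL : wordProd w = wordProd (nfWord L)) :
    Relation.ReflTransGen CommMove w (nfWord L) := by
  induction w using List.reverseRecOn generalizing L with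
  | nil =>
    have := invCount_wordProd_nfWord hL
    rw [← hwL, wordProd_nil, invCount_one, eq_comm, List.length_eq_zero_iff] at this
    rw [this]
  | append_singleton u k ih =>
    obtain ⟨hu, hdesc⟩ := hw.of_append_singleton
    have hk := (isWord_singleton.1 (isWord_append.1 hw.1).2).1
    rw [hwL] at hdesc
    obtain ⟨L', u', v, hL', hL'w, hLw, hv⟩ := exists_nfData_of_descent hL hk hdesc
    have hfar : ∀ l ∈ v, l + 2 ≤ k ∨ k + 2 ≤ l := fun l hl => .inl (hv l hl)
    have hu' : wordProd u = wordProd (nfWord L') := by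
      rw [hL'w, ← mul_adjSwap_mul_adjSwap (wordProd (u' ++ v)) k,
        ← wordProd_append_cons_of_far u' v hfar, ← hLw, ← hwL]
      simp
    rw [hLw]
    exact (commEquiv_append_right [k] (ih hL' hu hu')).trans (hL'w ▸ commEquiv_move_front u' v hfar)

def Contains321 (g : Equiv.Perm ℕ) : Prop := ∃ x y z, x < y ∧ y < z ∧ g z < g y ∧ g y < g x

lemma contains321_mul_adjSwap {g : Equiv.Perm ℕ} {k x y z : ℕ} (hk : 1 ≤ k) (hxy : x < y)
    (hyz : y < z) (h₁ : g z < g y) (h₂ : g y < g x) (hne₁ : ¬(x = k - 1 ∧ y = k))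
    (hne₂ : ¬(y = k - 1 ∧ z = k)) : Contains321 (g * adjSwap k) := by
  refine ⟨adjSwap k x, adjSwap k y, adjSwap k z, adjSwap_lt_adjSwap hk hxy hne₁,
    adjSwap_lt_adjSwap hk hyz hne₂, ?_, ?_⟩ <;>
  simpa [adjSwap]

/-- A `321` pattern that is not on consecutive positions can be moved closer together
by a descent, which lowers the inversion count. -/
lemma exists_descent_contains321_mul_adjSwap {n : ℕ} {g : Equiv.Perm ℕ} (hg : FixedAbove n g)
    (h : Contains321 g) (hcons : ¬∃ k, 1 ≤ k ∧ k + 1 ≤ n ∧ g (k + 1) < g k ∧ g k < g (k - 1)) :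
    ∃ k, 1 ≤ k ∧ k ≤ n ∧ g k < g (k - 1) ∧ Contains321 (g * adjSwap k) := by
  obtain ⟨x, y, z, hxy, hyz, h₁, h₂⟩ := h
  have hzn := hg.le_of_apply_lt hyz h₁
  by_cases hxy' : x + 1 < y
  · obtain ⟨k, hxk, hky, hdesc⟩ := exists_descent_between hxy h₂
    exact ⟨k, by omega, by omega, hdesc,
      contains321_mul_adjSwap (by omega) hxy hyz h₁ h₂ (by omega) (by omega)⟩
  by_cases hyz' : y + 1 < z
  · obtain ⟨k, hyk, hkz, hdesc⟩ := exists_descent_between hyz h₁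
    exact ⟨k, by omega, by omega, hdesc,
      contains321_mul_adjSwap (by omega) hxy hyz h₁ h₂ (by omega) (by omega)⟩
  obtain rfl : y = x + 1 := by omega
  obtain rfl : z = x + 2 := by omega
  exact absurd ⟨x + 1, by omega, by omega, h₁, by simpa using h₂⟩ hcons

theorem exists_isReducedWord_braid {n : ℕ} {g : Equiv.Perm ℕ} (hg : FixedAbove n g)
    (h : Contains321 g) : ∃ a b k, 1 ≤ k ∧ k + 1 ≤ n ∧
      IsReducedWord n (a ++ [k, k + 1, k] ++ b) ∧ wordProd (a ++ [k, k + 1, k] ++ b) = g := by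
  induction hN : invCount n g using Nat.strong_induction_on generalizing g with
  | _ N ih =>
    by_cases hcons : ∃ k, 1 ≤ k ∧ k + 1 ≤ n ∧ g (k + 1) < g k ∧ g k < g (k - 1)
    · obtain ⟨k, hk, hkn, h₁, h₂⟩ := hcons
      have hne : k + 1 - 1 = k ∧ k - 1 ≠ k ∧ k ≠ k - 1 ∧ k + 1 ≠ k - 1 ∧ k - 1 ≠ k + 1 ∧
          k + 1 ≠ k := by omega
      obtain ⟨u, hu, hug⟩ := exists_isReducedWord
        (((hg.mul_adjSwap (k := k) (by omega)).mul_adjSwap (k := k + 1) hkn).mul_adjSwap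
          (k := k) (by omega))
      have h₃ := hu.append_descent (g := g * adjSwap k * adjSwap (k + 1)) (k := k) hug hk
        (by omega) (by simpa [adjSwap_apply, hne] using h₁)
      have h₄ := h₃.1.append_descent (g := g * adjSwap k) (k := k + 1) h₃.2 (by omega) hkn (by
        simpa [adjSwap_apply, hne] using h₁.trans h₂)
      have h₅ := h₄.1.append_descent (g := g) (k := k) h₄.2 hk (by omega) h₂
      exact ⟨u, [], k, hk, hkn, by simpa using h₅⟩
    · obtain ⟨k, hk, hkn, hdesc, h'⟩ := exists_descent_contains321_mul_adjSwap hg h hcons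
      have := invCount_mul_adjSwap_of_gt hk hkn hdesc
      obtain ⟨a, b, k', hk', hk'n, hw, hwg⟩ := ih _ (by omega) (hg.mul_adjSwap hkn) h' rfl
      have := hw.append_descent hwg hk hkn hdesc
      exact ⟨a, b ++ [k], k', hk', hk'n, by simpa using this⟩

lemma filter_eq_of_commMove {k : ℕ} {u v : List ℕ} (h : CommMove u v) :
    u.filter (fun l => k ≤ l ∧ l ≤ k + 1) = v.filter (fun l => k ≤ l ∧ l ≤ k + 1) := by
  obtain ⟨a, b, i, j, hij⟩ := h
  simp only [List.filter_append, List.filter_cons]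
  split_ifs <;> simp_all
  omega

lemma filter_eq_of_commEquiv {k : ℕ} {u v : List ℕ} (h : Relation.ReflTransGen CommMove u v) :
    u.filter (fun l => k ≤ l ∧ l ≤ k + 1) = v.filter (fun l => k ≤ l ∧ l ≤ k + 1) := by
  induction h with
  | refl => rfl
  | tail _ h ih => exact ih.trans (filter_eq_of_commMove h)

lemma not_commEquiv_braid (a b : List ℕ) (k : ℕ) :
    ¬Relation.ReflTransGen CommMove (a ++ [k, k + 1, k] ++ b) (a ++ [k + 1, k, k + 1] ++ b) := by
  intro h
  simpa using filter_eq_of_commEquiv (k := k) h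

lemma contains321_wordProd_Ico_mul {i j : ℕ} {h : Equiv.Perm ℕ} (hi : 1 ≤ i) (hij : i ≤ j)
    (hh : FixedAbove (j - 1) h) (h321 : Contains321 h) :
    Contains321 (wordProd (List.Ico i (j + 1)) * h) := by
  obtain ⟨x, y, z, hxy, hyz, h₁, h₂⟩ := h321
  have hzj := hh.le_of_apply_lt hyz h₁
  have hne : ∀ v ≤ z, h v ≠ j := fun v hv => by have := hh.apply_le (x := v) (by omega); omega
  refine ⟨x, y, z, hxy, hyz, ?_, ?_⟩ <;>
    simp only [Equiv.Perm.mul_apply] <;>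
    rwa [wordProd_Ico_lt_iff hi hij (hne _ (by omega)) (hne _ (by omega))]

lemma fixedAbove_inv_wordProd_Ico_mul {j : ℕ} {g : Equiv.Perm ℕ} (hj : FixedAbove j g)
    (hgj : g j < j) : FixedAbove (j - 1) ((wordProd (List.Ico (g j + 1) (j + 1)))⁻¹ * g) := by
  intro x hx
  rw [Equiv.Perm.mul_apply, Equiv.Perm.inv_eq_iff_eq, wordProd_Ico_apply (by omega) (by omega)]
  rcases eq_or_lt_of_le (show j ≤ x by omega) with rfl | hx
  · simp
  · rw [hj x hx, if_neg (by omega), if_neg (by omega)]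

/-- Peeling `⌈i,j⌉` off a `321`-avoiding `g`, where `j` is the largest point moved by `g` and
`i - 1 = g j`, leaves a normal form whose blocks `⌈i',j'⌉` all have `i' < i`: for the first block,
`h⁻¹ j' < j' < j` would otherwise be a `321` pattern of `g`. -/
lemma forall_lt_of_not_contains321 {n i j : ℕ} {g : Equiv.Perm ℕ} {L : List (ℕ × ℕ)}
    (hg : ¬Contains321 g) (hi : 1 ≤ i) (hij : i ≤ j) (hL : NFData n L)
    (hh : FixedAbove (j - 1) (wordProd (nfWord L)))
    (hgh : g = wordProd (List.Ico i (j + 1)) * wordProd (nfWord L)) :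
    ∀ q ∈ L, q.1 < i ∧ q.2 < j := by
  obtain _ | ⟨⟨i', j'⟩, T⟩ := L
  · simp
  set h := wordProd (nfWord ((i', j') :: T))
  obtain ⟨hb, hdom, -⟩ := nfData_cons_iff.1 hL
  dsimp only at hb hdom
  have hhj' : h j' = i' - 1 := wordProd_nfWord_apply_snd hL (p := (i', j')) (by simp)
  have hj'j : j' < j := by
    by_contra! hc
    have := hh j' (by omega)
    omega
  suffices i' < i from fun q hq => by
    rcases List.mem_cons.1 hq with rfl | hq
    · exact ⟨this, hj'j⟩
    · have := hdom q hq
      omega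
  refine by_contra fun hii' => hg ?_
  have hh' : FixedAbove j' h := fun x hx => wordProd_nfWord_apply_of_lt
    (fun q hq => by rcases List.mem_cons.1 hq with rfl | hq <;> [rfl; exact (hdom q hq).2.le]) hx
  have hx₁ := hh'.inv_apply_lt_of_ne (by omega)
  have hC := wordProd_Ico_apply (j := j) hi (by omega)
  refine ⟨h⁻¹ j', j', j, hx₁, hj'j, ?_, ?_⟩ <;>
    simp only [hgh, Equiv.Perm.mul_apply, Equiv.Perm.coe_inv, Equiv.apply_symm_apply, hhj',
      hh j (by omega), hC] <;>
    split_ifs <;> omega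

theorem exists_nfData_of_not_contains321 {n : ℕ} {g : Equiv.Perm ℕ} (hg : FixedAbove n g)
    (h321 : ¬Contains321 g) : ∃ L, NFData n L ∧ wordProd (nfWord L) = g := by
  induction hN : invCount n g using Nat.strong_induction_on generalizing g with
  | _ N ih =>
    by_cases h1 : g = 1
    · exact ⟨[], nfData_iff.2 ⟨List.Pairwise.nil, by simp⟩, by simp [h1]⟩
    obtain ⟨j, hjn, hgj, hj⟩ := exists_max_moved hg h1
    have hgj' := hj.apply_lt_of_ne hgj
    set C := wordProd (List.Ico (g j + 1) (j + 1))
    have hh : FixedAbove (j - 1) (C⁻¹ * g) := fixedAbove_inv_wordProd_Ico_mul hj hgj'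
    have hcount : invCount n g = (j - g j) + invCount n (C⁻¹ * g) := by
      have := invCount_wordProd_Ico_mul (n := n) (i := g j + 1) (by omega) (by omega) hjn hh
      rwa [mul_inv_cancel_left, show j + 1 - (g j + 1) = j - g j by omega] at this
    have h321' : ¬Contains321 (C⁻¹ * g) := fun h' => h321 (by
      simpa [C] using contains321_wordProd_Ico_mul (i := g j + 1) (by omega) (by omega) hh h')
    obtain ⟨L, hL, hLh⟩ := ih _ (by omega) (hh.mono (by omega)) h321' rfl
    have hlt := forall_lt_of_not_contains321 (i := g j + 1) h321 (by omega) (by omega) hL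
      (hLh ▸ hh) (by simp [hLh, C])
    refine ⟨(g j + 1, j) :: L, nfData_cons_iff.2 ⟨⟨by omega, by omega, hjn⟩, hlt, hL⟩, ?_⟩
    simp [nfWord_cons, hLh, C]

lemma not_contains321_of_fc {n : ℕ} {g : Equiv.Perm (Fin (n + 1))} (hg : FC n g) :
    ¬Contains321 (natPerm n g) := by
  intro h
  obtain ⟨a, b, k, hk, -, hw, hwg⟩ := exists_isReducedWord_braid (fixedAbove_natPerm n g) h
  have hbraid : wordProd (a ++ [k + 1, k, k + 1] ++ b) = wordProd (a ++ [k, k + 1, k] ++ b) := by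
    simp only [wordProd_append, wordProd_cons, wordProd_nil, mul_one, ← mul_assoc,
      adjSwap_braid hk]
  have hw' : IsReducedWord n (a ++ [k + 1, k, k + 1] ++ b) :=
    ⟨fun l hl => hw.1 l (by simp at hl ⊢; tauto), by rw [hbraid, ← hw.2]; simp⟩
  exact not_commEquiv_braid a b k <| hg _ _ (reduced_iff_isReducedWord.2 hw)
    (reduced_iff_isReducedWord.2 hw') ((wprod_eq_iff hw.1 g).2 hwg)
    ((wprod_eq_iff hw'.1 g).2 (hbraid.trans hwg))

lemma fc_wprod_nfWord {n : ℕ} {L : List (ℕ × ℕ)} (hL : NFData n L) :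
    FC n (wprod n (nfWord L)) := by
  intro w w' hw hw' hwg hw'g
  rw [reduced_iff_isReducedWord] at hw hw'
  rw [wprod_eq_iff hw.1, natPerm_wprod (isWord_nfWord hL)] at hwg
  rw [wprod_eq_iff hw'.1, natPerm_wprod (isWord_nfWord hL)] at hw'g
  exact (commEquiv_nfWord_of_isReducedWord hL hw hwg).trans
    (commEquiv_symm (commEquiv_nfWord_of_isReducedWord hL hw' hw'g))

end TypeA

theorem stmt1 (n : ℕ) :
    (∀ g : Equiv.Perm (Fin (n+1)), FC n g →
      ∃! L : List (ℕ × ℕ), NFData n L ∧ wprod n (nfWord L) = g) ∧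
    (∀ L : List (ℕ × ℕ), NFData n L →
      FC n (wprod n (nfWord L)) ∧ Reduced n (nfWord L)) := by
  open TypeA in
  refine ⟨fun g hg => ?_, fun L hL =>
    ⟨fc_wprod_nfWord hL, reduced_iff_isReducedWord.2 (isReducedWord_nfWord hL)⟩⟩
  obtain ⟨L, hL, hLg⟩ :=
    exists_nfData_of_not_contains321 (fixedAbove_natPerm n g) (not_contains321_of_fc hg)
  refine ⟨L, ⟨hL, (wprod_eq_iff (isWord_nfWord hL) g).2 hLg⟩, fun L' ⟨hL', hL'g⟩ => ?_⟩
  refine nfData_eq_of_wordProd_eq hL' hL ?_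
  rw [(wprod_eq_iff (isWord_nfWord hL') g).1 hL'g, hLg]
end

section
/- The number of sequences (i_1,j_1),...,(i_p,j_p) with 0 ≤ p ≤ n, n ≥ j_1 > ··· > j_p ≥ 1, n ≥ i_1 > ··· > i_p ≥ 1, and j_t ≥ i_t for all t, equals the Catalan number C_{n+1}. -/
open Polynomial Finset

/-
Write `N(n, m)` for the number of such sequences in `[1, n]` with all `i_t ≤ m`. Sorting them by
whether `j_1 = n + 1` gives `N(n + 1, m) = N(n, m) + ∑_{k < m} N(n, k)` for `m ≤ n + 1`: the first
pair is then `(k + 1, n + 1)` and the rest is a sequence in `[1, n]` with all `i_t ≤ k`. By the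
hockey-stick identity this recursion is solved by the ballot numbers
`N(n, m) = C(n + m, n) - C(n + m, n + 2)`, and `C(2n, n) - C(2n, n + 2) = C_{n+1}`.
-/

theorem sum_range_choose_add_choose (n r m : ℕ) :
    ∑ k ∈ range m, (n + k).choose r + n.choose (r + 1) = (n + m).choose (r + 1) := by
  induction m with
  | zero => simp
  | succ m ih =>
    rw [sum_range_succ, add_right_comm, ih, ← add_assoc, Nat.choose_succ_succ', add_comm]

theorem catalan_succ_eq_choose_sub_choose (n : ℕ) :
    (catalan (n + 1) : ℤ) = (2 * n).choose n - (2 * n).choose (n + 2) := by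
  rcases Nat.eq_zero_or_pos n with rfl | hn
  · simp
  have hcat := succ_mul_catalan_eq_centralBinom (n + 1)
  have hcentral := Nat.succ_mul_centralBinom_succ n
  have h1 := Nat.choose_succ_right_eq (2 * n) n
  have h2 := Nat.choose_succ_right_eq (2 * n) (n + 1)
  simp only [Nat.centralBinom_eq_two_mul_choose] at hcat hcentral
  rw [show 2 * n - n = n by omega] at h1
  rw [show 2 * n - (n + 1) = n - 1 by omega] at h2
  zify [hn] at hcat hcentral h1 h2
  have hpos : ((n : ℤ) + 1) * (n + 2) ≠ 0 := by positivity
  refine mul_left_cancel₀ hpos ?_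
  linear_combination (↑n + 1) * hcat + hcentral + (↑n + 1) * h2 + (↑n - 1) * h1

namespace NormalForm

def IsNF (n m : ℕ) (L : List (ℕ × ℕ)) : Prop :=
  L.Pairwise (fun a b => b.1 < a.1 ∧ b.2 < a.2) ∧
    ∀ p ∈ L, 1 ≤ p.1 ∧ p.1 ≤ m ∧ p.1 ≤ p.2 ∧ p.2 ≤ n

@[simp]
theorem isNF_nil (n m : ℕ) : IsNF n m [] := by
  simp [IsNF]

theorem isNF_cons {n m i j : ℕ} {t : List (ℕ × ℕ)} :
    IsNF n m ((i, j) :: t) ↔ 1 ≤ i ∧ i ≤ m ∧ i ≤ j ∧ j ≤ n ∧ IsNF (j - 1) (i - 1) t := by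
  simp only [IsNF, List.pairwise_cons, List.forall_mem_cons]
  constructor
  · rintro ⟨⟨hlt, ht⟩, hij, hbd⟩
    refine ⟨hij.1, hij.2.1, hij.2.2.1, hij.2.2.2, ht, fun q hq => ?_⟩
    have := hlt q hq
    have := hbd q hq
    omega
  · rintro ⟨h1, hm, hij, hn, ht, hbd⟩
    refine ⟨⟨fun q hq => ?_, ht⟩, ⟨h1, hm, hij, hn⟩, fun q hq => ?_⟩ <;>
    · have := hbd q hq
      omega

theorem IsNF.length_le {n m : ℕ} {L : List (ℕ × ℕ)} (h : IsNF n m L) : L.length ≤ n := by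
  induction L generalizing n m with
  | nil => simp
  | cons p t ih =>
    obtain ⟨i, j⟩ := p
    obtain ⟨hi, -, hij, hjn, ht⟩ := isNF_cons.mp h
    have := ih ht
    simp only [List.length_cons]
    omega

theorem nfData_iff_isNF {n : ℕ} {L : List (ℕ × ℕ)} : NFData n L ↔ IsNF n n L := by
  let R : ℕ × ℕ → ℕ × ℕ → Prop := fun a b => b.1 < a.1 ∧ b.2 < a.2
  have : Trans R R R :=
    ⟨fun hab hbc => ⟨hbc.1.trans hab.1, hbc.2.trans hab.2⟩⟩
  refine ⟨fun ⟨_, hL, hbd⟩ => ⟨hL.pairwise, fun p hp => ?_⟩,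
    fun h => ⟨h.length_le, h.1.isChain, fun p hp => ?_⟩⟩
  · have := hbd p hp
    omega
  · have := h.2 p hp
    omega

theorem isNF_min {n m : ℕ} {L : List (ℕ × ℕ)} : IsNF n (min m n) L ↔ IsNF n m L := by
  refine and_congr_right fun _ => forall₂_congr fun p _ => ?_
  omega

theorem isNF_succ_iff {n m : ℕ} {L : List (ℕ × ℕ)} :
    IsNF (n + 1) m L ↔
      IsNF n m L ∨ ∃ k < min (n + 1) m, ∃ t, IsNF n k t ∧ L = (k + 1, n + 1) :: t := by
  rcases L with _ | ⟨⟨i, j⟩, t⟩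
  · simp
  simp only [isNF_cons, List.cons.injEq, Prod.mk.injEq]
  constructor
  · rintro ⟨h1, hm, hij, hjn, ht⟩
    rcases Nat.lt_or_ge j (n + 1) with hj | hj
    · exact Or.inl ⟨h1, hm, hij, by omega, ht⟩
    · refine Or.inr ⟨i - 1, by omega, t, ?_, ⟨by omega, by omega⟩, rfl⟩
      rwa [show n = j - 1 by omega]
  · rintro (⟨h1, hm, hij, hjn, ht⟩ | ⟨k, hk, _, ht, ⟨rfl, rfl⟩, rfl⟩)
    · exact ⟨h1, hm, hij, by omega, ht⟩
    · exact ⟨by omega, by omega, by omega, le_rfl, by simpa using ht⟩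

def nfFinset : ℕ → ℕ → Finset (List (ℕ × ℕ))
  | 0, _ => {[]}
  | n + 1, m => nfFinset n m ∪
      (range (min (n + 1) m)).biUnion fun k => (nfFinset n k).image ((k + 1, n + 1) :: ·)

theorem mem_nfFinset {n m : ℕ} {L : List (ℕ × ℕ)} : L ∈ nfFinset n m ↔ IsNF n m L := by
  induction n generalizing m L with
  | zero =>
    rcases L with _ | ⟨⟨i, j⟩, t⟩
    · simp [nfFinset]
    · simp only [nfFinset, mem_singleton, reduceCtorEq, false_iff, isNF_cons]
      omega
  | succ n ih =>
    simp [nfFinset, isNF_succ_iff, ih, eq_comm]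

theorem card_nfFinset_succ (n m : ℕ) :
    #(nfFinset (n + 1) m) = #(nfFinset n m) + ∑ k ∈ range (min (n + 1) m), #(nfFinset n k) := by
  rw [nfFinset, card_union_of_disjoint, card_biUnion]
  · congr 1
    exact sum_congr rfl fun k _ => card_image_of_injective _ (List.cons_injective)
  · intro k _ l _ hkl
    simp only [Function.onFun, disjoint_left, mem_image]
    rintro _ ⟨s, -, rfl⟩ ⟨t, -, hts⟩
    simp_all
  · simp only [disjoint_left, mem_biUnion, mem_image, mem_nfFinset, not_exists, not_and]
    rintro _ hL k - t - rfl
    have := (isNF_cons.mp hL).2.2.2.1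
    omega

theorem card_nfFinset_min (n m : ℕ) : #(nfFinset n (min m n)) = #(nfFinset n m) := by
  congr 1
  ext L
  simp only [mem_nfFinset, isNF_min]

theorem card_nfFinset {n m : ℕ} (h : m ≤ n) :
    (#(nfFinset n m) : ℤ) = (n + m).choose n - (n + m).choose (n + 2) := by
  induction n generalizing m with
  | zero => simp [nfFinset, Nat.le_zero.mp h]
  | succ n ih =>
    have hsum : ∑ k ∈ range m, (#(nfFinset n k) : ℤ) =
        (n + m).choose (n + 1) - (n + m).choose (n + 3) := by
      rw [sum_congr rfl fun k hk => ih (m := k) (by simp at hk; omega), sum_sub_distrib]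
      have h1 := sum_range_choose_add_choose n n m
      have h2 := sum_range_choose_add_choose n (n + 2) m
      rw [Nat.choose_eq_zero_of_lt (by omega : n < n + 1)] at h1
      rw [Nat.choose_eq_zero_of_lt (by omega : n < n + 2 + 1)] at h2
      simp only [add_zero] at h1 h2
      rw [← h1, ← h2]
      push_cast
      ring
    rw [card_nfFinset_succ, ← card_nfFinset_min, min_eq_right h]
    push_cast
    rw [hsum, ih (min_le_right m n)]
    rcases Nat.lt_or_ge m (n + 1) with hm | hm
    · rw [min_eq_left (by omega), show n + 1 + m = n + m + 1 by omega,
        Nat.choose_succ_succ' (n + m) n, Nat.choose_succ_succ' (n + m) (n + 2)]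
      push_cast
      ring
    · obtain rfl : m = n + 1 := by omega
      have hsymm : (2 * n + 1).choose n = (2 * n + 1).choose (n + 1) := by
        rw [← Nat.choose_symm_of_eq_add]
        omega
      rw [min_eq_right (by omega), show n + 1 + (n + 1) = 2 * n + 1 + 1 by omega,
        show n + (n + 1) = 2 * n + 1 by omega, show n + n = 2 * n by omega,
        Nat.choose_succ_succ' (2 * n + 1) n, Nat.choose_succ_succ' (2 * n + 1) (n + 2), hsymm,
        Nat.choose_succ_succ' (2 * n) n, Nat.choose_succ_succ' (2 * n) (n + 1)]
      push_cast
      ring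

end NormalForm

open NormalForm in
theorem stmt2 (n : ℕ) :
    Nat.card {L : List (ℕ × ℕ) // NFData n L} =
      Nat.choose (2*(n+1)) (n+1) / (n+2) := by
  have hset : {L | NFData n L} = (nfFinset n n : Set (List (ℕ × ℕ))) := by
    ext L
    simp [mem_nfFinset, nfData_iff_isNF]
  have hcard : (Nat.card {L // NFData n L} : ℤ) = catalan (n + 1) := by
    rw [← Set.coe_ofPred, hset, Nat.card_coe_set_eq, Set.ncard_coe_finset, card_nfFinset le_rfl,
      catalan_succ_eq_choose_sub_choose, two_mul]
  rw [Nat.cast_inj.mp hcard, catalan_eq_centralBinom_div, Nat.centralBinom_eq_two_mul_choose]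
end

section
/- For 1 ≤ j ≤ n, the length polynomials a_n^j(q) = Σ_{w ∈ A_n^j} q^{l(w)} satisfy the recurrence a_n^j = a_{n-1}^{j-1} + q^j (1 + Σ_{s=j}^{n-1} a_{n-1}^s), with conventions a_m^0 = 0 and a_m^j = 0 for j > m. -/
open Polynomial Finset

/-! Each Stembridge normal form `⌈i_1,j_1⌉ ⋯ ⌈i_p,j_p⌉` is a reduced word: every letter is an
ascent of the prefix before it, so the inversion number of the product equals the word length.
The product also determines the normal form: `i_p - 1` is its least moved point and `j_p` is sent
to `i_p - 1`. Hence `a_n^j` is the sum of `q^(word length)` over normal-form data ending at `j`.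
Those data with `i_p ≥ 2` are the shifts `⌈i,j⌉ ↦ ⌈i+1,j+1⌉` of the data of `A_{n-1}` ending at
`j - 1`; those with `i_p = 1` are `⌈1,j⌉` (contributing `q^j`) appended to the shift of a datum of
`A_{n-1}` that is empty or ends at some `s ≥ j`. -/

section Generators

variable {n : ℕ}

lemma sig_eq_swap {t : ℕ} (ht : 1 ≤ t) (htn : t ≤ n) :
    sig n t = Equiv.swap ⟨t - 1, by omega⟩ ⟨t, by omega⟩ := by
  rw [sig]
  congr <;> exact Fin.ext (Nat.mod_eq_of_lt (by omega))

lemma sig_apply_val {t : ℕ} (ht : 1 ≤ t) (htn : t ≤ n) (x : Fin (n + 1)) :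
    (sig n t x : ℕ) = if (x : ℕ) = t - 1 then t else if (x : ℕ) = t then t - 1 else (x : ℕ) := by
  rw [sig_eq_swap ht htn, Equiv.swap_apply_def]
  split_ifs <;> simp only [Fin.ext_iff] at * <;> omega

@[simp] lemma wprod_nil : wprod n [] = 1 := rfl

lemma wprod_append (w w' : List ℕ) : wprod n (w ++ w') = wprod n w * wprod n w' := by
  simp [wprod]

lemma wprod_concat (w : List ℕ) (t : ℕ) : wprod n (w ++ [t]) = wprod n w * sig n t := by
  simp [wprod]

/-- `⌈i,j⌉` is the cycle `i-1 ↦ i ↦ ⋯ ↦ j ↦ i-1` (the empty word when `j = i - 1`). -/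
lemma wprod_Ico_apply_val {i j : ℕ} (hi : 1 ≤ i) (hij : i - 1 ≤ j) (hjn : j ≤ n)
    (x : Fin (n + 1)) :
    (wprod n (List.Ico i (j + 1)) x : ℕ) =
      if (x : ℕ) + 1 < i ∨ j < x then (x : ℕ) else if (x : ℕ) = j then i - 1 else (x : ℕ) + 1 := by
  induction j, hij using Nat.le_induction generalizing x with
  | base =>
    rw [Nat.sub_add_cancel hi, List.Ico.self_empty, wprod_nil]
    split_ifs <;> simp <;> omega
  | succ j hij ih =>
    rw [List.Ico.succ_top (by omega), wprod_concat, Equiv.Perm.mul_apply, ih (by omega),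
      sig_apply_val (by omega) hjn, Nat.add_sub_cancel]
    split_ifs <;> omega

end Generators

section Inversions

variable {m : ℕ}

def inversions (σ : Equiv.Perm (Fin m)) : Finset (Fin m × Fin m) :=
  univ.filter fun p => p.1 < p.2 ∧ σ p.2 < σ p.1

@[simp] lemma mem_inversions {σ : Equiv.Perm (Fin m)} {p : Fin m × Fin m} :
    p ∈ inversions σ ↔ p.1 < p.2 ∧ σ p.2 < σ p.1 := by
  simp [inversions]

lemma inversions_one : inversions (1 : Equiv.Perm (Fin m)) = ∅ := by
  ext p
  simp only [mem_inversions, Equiv.Perm.one_apply, notMem_empty, iff_false]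
  exact fun h => h.1.asymm h.2

lemma swap_mem_inversions_mul_swap_erase {a b : Fin m} (hab : (a : ℕ) + 1 = b)
    {σ : Equiv.Perm (Fin m)} {p : Fin m × Fin m} (hp : p ∈ (inversions σ).erase (a, b)) :
    (Equiv.swap a b p.1, Equiv.swap a b p.2) ∈ (inversions (σ * Equiv.swap a b)).erase (a, b) := by
  obtain ⟨x, y⟩ := p
  simp only [mem_inversions, mem_erase, ne_eq, Prod.mk.injEq, Equiv.Perm.mul_apply,
    Equiv.swap_apply_self] at hp ⊢
  refine ⟨?_, ?_, hp.2.2⟩ <;> rw [Equiv.swap_apply_def, Equiv.swap_apply_def] <;>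
    split_ifs <;> simp only [Fin.lt_def, Fin.ext_iff] at * <;> omega

/-- Right multiplication by an adjacent transposition `(a b)` permutes the inversions
other than `(a, b)`. -/
lemma card_inversions_mul_swap_erase {a b : Fin m} (hab : (a : ℕ) + 1 = b)
    (σ : Equiv.Perm (Fin m)) :
    #((inversions (σ * Equiv.swap a b)).erase (a, b)) = #((inversions σ).erase (a, b)) := by
  refine card_nbij' (fun p => (Equiv.swap a b p.1, Equiv.swap a b p.2))
    (fun p => (Equiv.swap a b p.1, Equiv.swap a b p.2)) (fun p hp => ?_)
    (fun p hp => swap_mem_inversions_mul_swap_erase hab hp) (fun p _ => by simp)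
    (fun p _ => by simp)
  simpa only [mem_coe, mul_assoc, Equiv.swap_mul_self, mul_one] using
    swap_mem_inversions_mul_swap_erase hab hp

lemma card_inversions_mul_swap_le {a b : Fin m} (hab : (a : ℕ) + 1 = b)
    (σ : Equiv.Perm (Fin m)) :
    #(inversions (σ * Equiv.swap a b)) ≤ #(inversions σ) + 1 := by
  have h₁ := pred_card_le_card_erase (s := inversions (σ * Equiv.swap a b)) (a := (a, b))
  have h₂ := card_erase_le (s := inversions σ) (a := (a, b))
  rw [card_inversions_mul_swap_erase hab] at h₁
  omega

lemma card_inversions_mul_swap_of_lt {a b : Fin m} (hab : (a : ℕ) + 1 = b)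
    {σ : Equiv.Perm (Fin m)} (hσ : σ a < σ b) :
    #(inversions (σ * Equiv.swap a b)) = #(inversions σ) + 1 := by
  have hlt : a < b := by rw [Fin.lt_def]; omega
  have hmem : (a, b) ∈ inversions (σ * Equiv.swap a b) := by
    simpa using ⟨hlt, hσ⟩
  have hnotMem : (a, b) ∉ inversions σ := by
    simpa using fun _ => hσ.le
  rw [← card_erase_add_one hmem, card_inversions_mul_swap_erase hab,
    erase_eq_of_notMem hnotMem]

end Inversions

section Length

variable {n : ℕ}

lemma card_inversions_mul_sig_le {t : ℕ} (ht : 1 ≤ t) (htn : t ≤ n)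
    (σ : Equiv.Perm (Fin (n + 1))) :
    #(inversions (σ * sig n t)) ≤ #(inversions σ) + 1 := by
  rw [sig_eq_swap ht htn]
  exact card_inversions_mul_swap_le (by simp; omega) σ

lemma card_inversions_mul_sig_of_lt {t : ℕ} (ht : 1 ≤ t) (htn : t ≤ n)
    {σ : Equiv.Perm (Fin (n + 1))} (hσ : σ ⟨t - 1, by omega⟩ < σ ⟨t, by omega⟩) :
    #(inversions (σ * sig n t)) = #(inversions σ) + 1 := by
  rw [sig_eq_swap ht htn]
  exact card_inversions_mul_swap_of_lt (by simp; omega) hσ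

lemma card_inversions_wprod_le {w : List ℕ} (hw : IsWord n w) :
    #(inversions (wprod n w)) ≤ w.length := by
  induction w using List.reverseRecOn with
  | nil => simp [inversions_one]
  | append_singleton w t ih =>
    have ht := hw t (by simp)
    rw [wprod_concat, List.length_append, List.length_singleton]
    have := card_inversions_mul_sig_le ht.1 ht.2 (wprod n w)
    have := ih fun s hs => hw s (by simp [hs])
    omega

lemma len_wprod_of_card_inversions {w : List ℕ} (hw : IsWord n w)
    (h : #(inversions (wprod n w)) = w.length) : len n (wprod n w) = w.length := by
  have hw : w.length ∈ {k | ∃ v, IsWord n v ∧ wprod n v = wprod n w ∧ v.length = k} :=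
    ⟨w, hw, rfl, rfl⟩
  obtain ⟨v, hv, hvw, hlen⟩ := Nat.sInf_mem ⟨_, hw⟩
  have := card_inversions_wprod_le hv
  rw [hvw, h] at this
  exact le_antisymm (Nat.sInf_le hw) (hlen ▸ this : w.length ≤ sInf _)

end Length

section NormalForm

variable {n : ℕ}

lemma nfData_iff {L : List (ℕ × ℕ)} :
    NFData n L ↔ L.Pairwise (fun a b => b.1 < a.1 ∧ b.2 < a.2) ∧
      ∀ p ∈ L, 1 ≤ p.1 ∧ p.1 ≤ p.2 ∧ p.2 ≤ n := by
  have : Trans (fun a b : ℕ × ℕ => b.1 < a.1 ∧ b.2 < a.2)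
      (fun a b : ℕ × ℕ => b.1 < a.1 ∧ b.2 < a.2) (fun a b : ℕ × ℕ => b.1 < a.1 ∧ b.2 < a.2) :=
    ⟨fun h₁ h₂ => ⟨h₂.1.trans h₁.1, h₂.2.trans h₁.2⟩⟩
  have hchain : L.IsChain (fun a b => b.1 < a.1 ∧ b.2 < a.2) ↔ _ := List.isChain_iff_pairwise
  refine ⟨fun h => ⟨hchain.mp h.2.1, h.2.2⟩, fun h => ⟨?_, hchain.mpr h.1, h.2⟩⟩
  have hnd : (L.map Prod.fst).Nodup := List.pairwise_map.mpr (h.1.imp fun h => h.1.ne')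
  calc L.length = #(L.map Prod.fst).toFinset := by
        rw [List.toFinset_card_of_nodup hnd, List.length_map]
    _ ≤ #(Icc 1 n) := card_le_card fun x hx => by
        obtain ⟨p, hp, rfl⟩ := List.mem_map.mp (List.mem_toFinset.mp hx)
        have := h.2 p hp
        simp only [mem_Icc]
        omega
    _ = n := by simp

lemma nfData_concat_iff {M : List (ℕ × ℕ)} {p : ℕ × ℕ} :
    NFData n (M ++ [p]) ↔ NFData n M ∧ (1 ≤ p.1 ∧ p.1 ≤ p.2 ∧ p.2 ≤ n) ∧
      ∀ q ∈ M, p.1 < q.1 ∧ p.2 < q.2 := by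
  simp only [nfData_iff, List.pairwise_append, List.pairwise_singleton, List.mem_append,
    List.mem_singleton, forall_eq, true_and, or_imp, forall_and]
  tauto

lemma nfWord_append (L L' : List (ℕ × ℕ)) : nfWord (L ++ L') = nfWord L ++ nfWord L' := by
  simp [nfWord]

lemma nfWord_singleton (p : ℕ × ℕ) : nfWord [p] = List.Ico p.1 (p.2 + 1) := by
  simp [nfWord]

lemma nfWord_concat (L : List (ℕ × ℕ)) (i j : ℕ) :
    nfWord (L ++ [(i, j)]) = nfWord L ++ List.Ico i (j + 1) := by
  rw [nfWord_append, nfWord_singleton]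

lemma isWord_nfWord {L : List (ℕ × ℕ)} (hL : NFData n L) : IsWord n (nfWord L) := by
  intro t ht
  obtain ⟨_, hw, htp⟩ := List.mem_flatten.mp ht
  obtain ⟨p, hp, rfl⟩ := List.mem_map.mp hw
  have := (nfData_iff.mp hL).2 p hp
  rw [List.Ico.mem] at htp
  omega

end NormalForm

section Evaluation

variable {n : ℕ}

lemma wprod_nfWord_apply_of_succ_lt {L : List (ℕ × ℕ)} (hL : NFData n L) {x : Fin (n + 1)}
    (hx : ∀ p ∈ L, (x : ℕ) + 1 < p.1) : wprod n (nfWord L) x = x := by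
  induction L using List.reverseRecOn with
  | nil => rfl
  | append_singleton M p ih =>
    obtain ⟨hM, hp, -⟩ := nfData_concat_iff.mp hL
    have hxp := hx p (by simp)
    have hfix : wprod n (List.Ico p.1 (p.2 + 1)) x = x := Fin.ext <| by
      rw [wprod_Ico_apply_val hp.1 (by omega) hp.2.2, if_pos (Or.inl hxp)]
    rw [nfWord_append, nfWord_singleton, wprod_append, Equiv.Perm.mul_apply, hfix,
      ih hM fun q hq => hx q (by simp [hq])]

lemma le_wprod_nfWord_apply {L : List (ℕ × ℕ)} (hL : NFData n L) {x : Fin (n + 1)}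
    (hx : ∀ p ∈ L, (x : ℕ) < p.2) : (x : ℕ) ≤ wprod n (nfWord L) x := by
  induction L using List.reverseRecOn generalizing x with
  | nil => simp [nfWord]
  | append_singleton M p ih =>
    obtain ⟨hM, hp, hMp⟩ := nfData_concat_iff.mp hL
    have hxp := hx p (by simp)
    have hy : (x : ℕ) ≤ wprod n (List.Ico p.1 (p.2 + 1)) x ∧
        (wprod n (List.Ico p.1 (p.2 + 1)) x : ℕ) ≤ p.2 := by
      rw [wprod_Ico_apply_val hp.1 (by omega) hp.2.2]
      split_ifs <;> omega
    rw [nfWord_append, nfWord_singleton, wprod_append, Equiv.Perm.mul_apply]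
    exact hy.1.trans (ih hM fun q hq => hy.2.trans_lt (hMp q hq).2)

variable {M : List (ℕ × ℕ)} {i j : ℕ}

lemma wprod_nfWord_concat_apply_top (hL : NFData n (M ++ [(i, j)])) {x : Fin (n + 1)}
    (hx : (x : ℕ) = j) : (wprod n (nfWord (M ++ [(i, j)])) x : ℕ) = i - 1 := by
  obtain ⟨hM, hp, hMp⟩ := nfData_concat_iff.mp hL
  have hy : (wprod n (List.Ico i (j + 1)) x : ℕ) = i - 1 := by
    rw [wprod_Ico_apply_val hp.1 (by omega) hp.2.2]
    split_ifs <;> omega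
  rw [nfWord_concat, wprod_append, Equiv.Perm.mul_apply,
    wprod_nfWord_apply_of_succ_lt hM fun q hq => by have := (hMp q hq).1; omega, hy]

lemma le_wprod_nfWord_concat_apply_pred (hL : NFData n (M ++ [(i, j)])) {x : Fin (n + 1)}
    (hx : (x : ℕ) = i - 1) : i ≤ (wprod n (nfWord (M ++ [(i, j)])) x : ℕ) := by
  obtain ⟨hM, hp, hMp⟩ := nfData_concat_iff.mp hL
  have hy : (wprod n (List.Ico i (j + 1)) x : ℕ) = i := by
    rw [wprod_Ico_apply_val hp.1 (by omega) hp.2.2]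
    split_ifs <;> omega
  rw [nfWord_concat, wprod_append, Equiv.Perm.mul_apply]
  exact hy.symm.le.trans (le_wprod_nfWord_apply hM fun q hq => by have := (hMp q hq).2; omega)

/-- Every letter of `⌈i_1,j_1⌉ ⋯ ⌈i_p,j_p⌉` is an ascent: the prefix before the letter `t`
of the last segment sends `t - 1` to `i - 1` and `t` to a point `≥ t`. -/
lemma wprod_nfWord_append_Ico_lt (hL : NFData n (M ++ [(i, j)])) {t : ℕ} (hit : i ≤ t)
    (htj : t ≤ j) {x y : Fin (n + 1)} (hx : (x : ℕ) = t - 1) (hy : (y : ℕ) = t) :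
    wprod n (nfWord M ++ List.Ico i t) x < wprod n (nfWord M ++ List.Ico i t) y := by
  obtain ⟨hM, hp, hMp⟩ := nfData_concat_iff.mp hL
  have hseg := wprod_Ico_apply_val (n := n) hp.1 (show i - 1 ≤ t - 1 by omega) (by omega)
  rw [Nat.sub_add_cancel (by omega)] at hseg
  have hx' : (wprod n (List.Ico i t) x : ℕ) = i - 1 := by rw [hseg, hx]; split_ifs <;> omega
  have hy' : (wprod n (List.Ico i t) y : ℕ) = t := by rw [hseg, hy]; split_ifs <;> omega
  rw [wprod_append, Equiv.Perm.mul_apply, Equiv.Perm.mul_apply,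
    wprod_nfWord_apply_of_succ_lt hM fun q hq => by have := (hMp q hq).1; omega, Fin.lt_def]
  have := le_wprod_nfWord_apply hM (x := wprod n (List.Ico i t) y) fun q hq => by
    have := (hMp q hq).2; omega
  omega

end Evaluation

section Reduced

variable {n : ℕ}

lemma card_inversions_wprod_nfWord {L : List (ℕ × ℕ)} (hL : NFData n L) :
    #(inversions (wprod n (nfWord L))) = (nfWord L).length := by
  induction L using List.reverseRecOn with
  | nil => simp [nfWord, inversions_one]
  | append_singleton M p ih =>
    obtain ⟨i, j⟩ := p
    obtain ⟨hM, hp, -⟩ := nfData_concat_iff.mp hL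
    have hprefix : ∀ t, i ≤ t → t ≤ j + 1 →
        #(inversions (wprod n (nfWord M ++ List.Ico i t))) = (nfWord M).length + (t - i) := by
      intro t hit
      induction t, hit using Nat.le_induction with
      | base => simpa using fun _ => ih hM
      | succ t hit ih' =>
        intro htj
        rw [List.Ico.succ_top hit, ← List.append_assoc, wprod_concat,
          card_inversions_mul_sig_of_lt (by omega) (by omega)
            (wprod_nfWord_append_Ico_lt hL hit (by omega) rfl rfl), ih' (by omega)]
        omega
    rw [nfWord_concat, hprefix (j + 1) (by omega) le_rfl, List.length_append, List.Ico.length]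

lemma len_wprod_nfWord {L : List (ℕ × ℕ)} (hL : NFData n L) :
    len n (wprod n (nfWord L)) = (nfWord L).length :=
  len_wprod_of_card_inversions (isWord_nfWord hL) (card_inversions_wprod_nfWord hL)

end Reduced

section Injective

variable {n : ℕ}

lemma wprod_nfWord_concat_ne_one {M : List (ℕ × ℕ)} {i j : ℕ} (hL : NFData n (M ++ [(i, j)])) :
    wprod n (nfWord (M ++ [(i, j)])) ≠ 1 := by
  have hp := (nfData_concat_iff.mp hL).2.1
  intro h
  have := le_wprod_nfWord_concat_apply_pred hL (x := ⟨i - 1, by omega⟩) rfl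
  rw [h, Equiv.Perm.one_apply, Fin.val_mk] at this
  omega

/-- `i_p - 1` is the least point moved by the normal form, so it is determined by the product. -/
lemma le_of_wprod_nfWord_concat_eq {M M' : List (ℕ × ℕ)} {i j i' j' : ℕ}
    (hL : NFData n (M ++ [(i, j)])) (hL' : NFData n (M' ++ [(i', j')]))
    (h : wprod n (nfWord (M ++ [(i, j)])) = wprod n (nfWord (M' ++ [(i', j')]))) : i ≤ i' := by
  obtain ⟨-, hp, hMp⟩ := nfData_concat_iff.mp hL
  have hp' := (nfData_concat_iff.mp hL').2.1
  by_contra! hlt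
  have hfix := wprod_nfWord_apply_of_succ_lt hL (x := ⟨i' - 1, by omega⟩) fun q hq => by
    rcases List.mem_append.mp hq with hq | hq
    · have := (hMp q hq).1; simp only; omega
    · simp only [List.mem_singleton] at hq; subst hq; simp only; omega
  have hmove := le_wprod_nfWord_concat_apply_pred hL' (x := ⟨i' - 1, by omega⟩) rfl
  rw [← h, hfix] at hmove
  simp only at hmove
  omega

lemma wprod_nfWord_injective {L L' : List (ℕ × ℕ)} (hL : NFData n L) (hL' : NFData n L')
    (h : wprod n (nfWord L) = wprod n (nfWord L')) : L = L' := by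
  induction L using List.reverseRecOn generalizing L' with
  | nil =>
    rcases List.eq_nil_or_concat' L' with rfl | ⟨M', ⟨i', j'⟩, rfl⟩
    · rfl
    · exact absurd h.symm (wprod_nfWord_concat_ne_one hL')
  | append_singleton M p ih =>
    obtain ⟨i, j⟩ := p
    rcases List.eq_nil_or_concat' L' with rfl | ⟨M', ⟨i', j'⟩, rfl⟩
    · exact absurd h (wprod_nfWord_concat_ne_one hL)
    have hi : i = i' := le_antisymm (le_of_wprod_nfWord_concat_eq hL hL' h)
      (le_of_wprod_nfWord_concat_eq hL' hL h.symm)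
    subst hi
    have hp := (nfData_concat_iff.mp hL).2.1
    have hp' := (nfData_concat_iff.mp hL').2.1
    have hj : j = j' := by
      have htop := wprod_nfWord_concat_apply_top hL (x := ⟨j, by omega⟩) rfl
      have htop' := wprod_nfWord_concat_apply_top hL' (x := ⟨j', by omega⟩) rfl
      rw [h, ← htop', ← Fin.ext_iff] at htop
      simpa using (wprod n (nfWord (M' ++ [(i, j')]))).injective htop
    subst hj
    rw [nfWord_concat, nfWord_concat, wprod_append, wprod_append] at h
    rw [ih (nfData_concat_iff.mp hL).1 (nfData_concat_iff.mp hL').1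
      (mul_right_cancel h)]

end Injective

section Enumeration

variable {n j : ℕ}

lemma finite_setOf_nfData_ending (n j : ℕ) :
    {L : List (ℕ × ℕ) | NFData n L ∧ ∃ M i, L = M ++ [(i, j)]}.Finite := by
  let S : Set (ℕ × ℕ) := Set.Iic n ×ˢ Set.Iic n
  have := ((Set.finite_Iic n).prod (Set.finite_Iic n)).to_subtype
  refine ((List.finite_length_le S n).image (List.map Subtype.val)).subset ?_
  rintro L ⟨hL, -⟩
  lift L to List S using fun p hp => by
    have := (nfData_iff.mp hL).2 p hp
    simp only [S, Set.mem_prod, Set.mem_Iic]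
    omega
  exact ⟨L, by simpa using hL.1, rfl⟩

/-- The normal-form data of the elements of `A_n^j`. -/
noncomputable def nfEnding (n j : ℕ) : Finset (List (ℕ × ℕ)) :=
  (finite_setOf_nfData_ending n j).toFinset

lemma mem_nfEnding {L : List (ℕ × ℕ)} :
    L ∈ nfEnding n j ↔ NFData n L ∧ ∃ M i, L = M ++ [(i, j)] := by
  simp [nfEnding]

lemma anj_eq_sum_nfEnding (n j : ℕ) :
    anj n j = ∑ L ∈ nfEnding n j, (X : ℤ[X]) ^ (nfWord L).length := by
  symm
  refine sum_bij (fun L _ => wprod n (nfWord L)) ?_ ?_ ?_ ?_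
  · rintro L hL
    obtain ⟨hL, M, i, rfl⟩ := mem_nfEnding.mp hL
    simpa [Anj] using ⟨_, hL, rfl, by simp⟩
  · exact fun L hL L' hL' h => wprod_nfWord_injective (mem_nfEnding.mp hL).1
      (mem_nfEnding.mp hL').1 h
  · intro g hg
    obtain ⟨L, hL, rfl, hne, hlast⟩ := (Set.Finite.mem_toFinset _).mp hg
    refine ⟨L, mem_nfEnding.mpr ⟨hL, L.dropLast, (L.getLast hne).1, ?_⟩, rfl⟩
    rw [← hlast]
    exact (List.dropLast_append_getLast hne).symm
  · exact fun L hL => by rw [len_wprod_nfWord (mem_nfEnding.mp hL).1]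

lemma nfEnding_eq_empty (h : j = 0 ∨ n < j) : nfEnding n j = ∅ := by
  refine eq_empty_of_forall_notMem fun L hL => ?_
  obtain ⟨hL, M, i, rfl⟩ := mem_nfEnding.mp hL
  have := (nfData_concat_iff.mp hL).2.1
  omega

lemma anj_eq_zero (h : j = 0 ∨ n < j) : anj n j = 0 := by
  rw [anj_eq_sum_nfEnding, nfEnding_eq_empty h, sum_empty]

end Enumeration

section Recurrence

variable {m k : ℕ}

/-- `⌈i,j⌉ ↦ ⌈i+1,j+1⌉` on every segment: the embedding `W(A_m) ↪ W(A_{m+1})`, `σ_t ↦ σ_{t+1}`,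
on normal forms. -/
def nfShift (L : List (ℕ × ℕ)) : List (ℕ × ℕ) := L.map fun p => (p.1 + 1, p.2 + 1)

def nfUnshift (L : List (ℕ × ℕ)) : List (ℕ × ℕ) := L.map fun p => (p.1 - 1, p.2 - 1)

lemma nfShift_injective : Function.Injective nfShift :=
  List.map_injective_iff.mpr fun p q h => by
    simp only [Prod.mk.injEq, add_left_inj] at h
    exact Prod.ext h.1 h.2

lemma nfShift_nfUnshift {L : List (ℕ × ℕ)} (h : ∀ p ∈ L, 1 ≤ p.1 ∧ 1 ≤ p.2) :
    nfShift (nfUnshift L) = L := by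
  rw [nfShift, nfUnshift, List.map_map]
  refine List.map_congr_left (fun p hp => ?_) |>.trans (List.map_id L)
  have := h p hp
  ext <;> simp only [Function.comp, id] <;> omega

lemma length_nfWord_nfShift (L : List (ℕ × ℕ)) :
    (nfWord (nfShift L)).length = (nfWord L).length := by
  simp [nfWord, nfShift, List.length_flatten, Function.comp_def]

lemma NFData.nfShift {L : List (ℕ × ℕ)} (hL : NFData m L) : NFData (m + 1) (nfShift L) := by
  rw [nfData_iff] at hL ⊢
  refine ⟨List.pairwise_map.mpr (hL.1.imp fun h => by omega), fun p hp => ?_⟩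
  obtain ⟨q, hq, rfl⟩ := List.mem_map.mp hp
  have := hL.2 q hq
  omega

lemma NFData.nfUnshift {L : List (ℕ × ℕ)} (hL : NFData (m + 1) L) (h : ∀ p ∈ L, 2 ≤ p.1) :
    NFData m (nfUnshift L) := by
  rw [nfData_iff] at hL ⊢
  refine ⟨List.pairwise_map.mpr (hL.1.imp_of_mem fun ha hb hab => ?_), fun p hp => ?_⟩
  · have := hL.2 _ ha; have := hL.2 _ hb; omega
  · obtain ⟨q, hq, rfl⟩ := List.mem_map.mp hp
    have := hL.2 q hq; have := h q hq
    omega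

noncomputable def nfAbove (m k : ℕ) : Finset (List (ℕ × ℕ)) :=
  insert [] ((Icc (k + 1) m).biUnion (nfEnding m))

lemma mem_nfAbove {M : List (ℕ × ℕ)} : M ∈ nfAbove m k ↔ NFData m M ∧ ∀ p ∈ M, k < p.2 := by
  simp only [nfAbove, mem_insert, mem_biUnion, mem_Icc, mem_nfEnding]
  constructor
  · rintro (rfl | ⟨s, hs, hM, M', i, rfl⟩)
    · simp [nfData_iff]
    · refine ⟨hM, fun p hp => ?_⟩
      obtain ⟨-, -, hM'⟩ := nfData_concat_iff.mp hM
      rcases List.mem_append.mp hp with hp | hp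
      · have := (hM' p hp).2; omega
      · simp only [List.mem_singleton] at hp; subst hp; simp only; omega
  · rintro ⟨hM, hk⟩
    rcases List.eq_nil_or_concat' M with rfl | ⟨M', ⟨i, s⟩, rfl⟩
    · exact Or.inl rfl
    · have := (nfData_concat_iff.mp hM).2.1
      have := hk (i, s) (by simp)
      exact Or.inr ⟨s, ⟨by omega, by omega⟩, hM, M', i, rfl⟩

/-- The two parts are the normal forms with `i_p ≥ 2` and those with `i_p = 1`. -/
lemma nfEnding_succ_succ (hk : k ≤ m) :
    nfEnding (m + 1) (k + 1) = (nfEnding m k).image nfShift ∪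
      (nfAbove m k).image fun M => nfShift M ++ [(1, k + 1)] := by
  ext L
  simp only [mem_union, mem_image, mem_nfAbove, mem_nfEnding]
  constructor
  · rintro ⟨hL, M, i, rfl⟩
    obtain ⟨hM, hp, hMp⟩ := nfData_concat_iff.mp hL
    by_cases hi : i = 1
    · subst hi
      have h2 : ∀ q ∈ M, 2 ≤ q.1 := fun q hq => (hMp q hq).1
      refine Or.inr ⟨nfUnshift M, ⟨hM.nfUnshift h2, fun p hp => ?_⟩, ?_⟩
      · obtain ⟨q, hq, rfl⟩ := List.mem_map.mp hp
        have := (hMp q hq).2; simp only; omega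
      · rw [nfShift_nfUnshift fun q hq => by have := hMp q hq; omega]
    · have h2 : ∀ q ∈ M ++ [(i, k + 1)], 2 ≤ q.1 := fun q hq => by
        rcases List.mem_append.mp hq with hq | hq
        · have := (hMp q hq).1; omega
        · simp only [List.mem_singleton] at hq; subst hq; simp only; omega
      refine Or.inl ⟨nfUnshift (M ++ [(i, k + 1)]), ⟨hL.nfUnshift h2, nfUnshift M, i - 1, ?_⟩, ?_⟩
      · simp [nfUnshift]
      · rw [nfShift_nfUnshift fun q hq => by
          have := h2 q hq; have := (nfData_iff.mp hL).2 q hq; omega]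
  · rintro (⟨L', ⟨hL', M', i, rfl⟩, rfl⟩ | ⟨M, ⟨hM, hMk⟩, rfl⟩)
    · exact ⟨hL'.nfShift, nfShift M', i + 1, by simp [nfShift]⟩
    · refine ⟨nfData_concat_iff.mpr ⟨hM.nfShift, by omega, fun q hq => ?_⟩,
        nfShift M, 1, rfl⟩
      obtain ⟨p, hp, rfl⟩ := List.mem_map.mp hq
      have := hMk p hp
      have := (nfData_iff.mp hM).2 p hp
      simp only
      omega

lemma disjoint_image_nfShift_image_nfAbove :
    Disjoint ((nfEnding m k).image nfShift)
      ((nfAbove m k).image fun M => nfShift M ++ [(1, k + 1)]) := by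
  refine disjoint_left.mpr fun L hL hL' => ?_
  obtain ⟨L', hL'', rfl⟩ := mem_image.mp hL
  obtain ⟨M, -, hM⟩ := mem_image.mp hL'
  -- only the second kind contains a segment starting at `σ_1`
  have hmem : (1, k + 1) ∈ nfShift L' := by rw [← hM]; simp
  obtain ⟨p, hp, hp1⟩ := List.mem_map.mp hmem
  have := (nfData_iff.mp (mem_nfEnding.mp hL'').1).2 p hp
  simp only [Prod.mk.injEq] at hp1
  omega

lemma pairwiseDisjoint_nfEnding (s : Set ℕ) : s.PairwiseDisjoint (nfEnding m) := by
  refine fun a _ b _ hab => disjoint_left.mpr fun L ha hb => hab ?_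
  obtain ⟨-, M, i, rfl⟩ := mem_nfEnding.mp ha
  obtain ⟨-, M', i', h⟩ := mem_nfEnding.mp hb
  have := congrArg List.getLast? h
  simp only [List.getLast?_append, List.getLast?_singleton, Option.some_or, Option.some.injEq,
    Prod.mk.injEq] at this
  exact this.2

lemma sum_nfAbove (f : List (ℕ × ℕ) → ℤ[X]) :
    ∑ M ∈ nfAbove m k, f M = f [] + ∑ s ∈ Icc (k + 1) m, ∑ M ∈ nfEnding m s, f M := by
  have hnil : [] ∉ (Icc (k + 1) m).biUnion (nfEnding m) := fun h => by
    obtain ⟨s, -, hs⟩ := mem_biUnion.mp h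
    obtain ⟨-, M, i, hM⟩ := mem_nfEnding.mp hs
    simp at hM
  rw [nfAbove, sum_insert hnil, sum_biUnion (pairwiseDisjoint_nfEnding _)]

lemma anj_succ_succ (hk : k ≤ m) :
    anj (m + 1) (k + 1) = anj m k + X ^ (k + 1) * (1 + ∑ s ∈ Icc (k + 1) m, anj m s) := by
  simp only [anj_eq_sum_nfEnding]
  rw [nfEnding_succ_succ hk, sum_union disjoint_image_nfShift_image_nfAbove,
    sum_image fun _ _ _ _ h => nfShift_injective h,
    sum_image fun _ _ _ _ h => nfShift_injective (List.append_inj_left' h rfl),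
    sum_nfAbove]
  simp only [nfWord_append, List.length_append, length_nfWord_nfShift, nfWord_singleton,
    List.Ico.length, Nat.add_sub_cancel, pow_add, mul_add, mul_sum]
  simp [nfWord, mul_comm]

end Recurrence

theorem stmt4 :
    (∀ m : ℕ, anj m 0 = 0) ∧ (∀ m j : ℕ, m < j → anj m j = 0) ∧
    ∀ n j : ℕ, 1 ≤ j → j ≤ n →
      anj n j = anj (n-1) (j-1) +
        X ^ j * (1 + ∑ s ∈ Finset.Icc j (n-1), anj (n-1) s) := by
  refine ⟨fun m => anj_eq_zero (Or.inl rfl), fun m j h => anj_eq_zero (Or.inr h), ?_⟩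
  intro n j hj hjn
  obtain ⟨m, rfl⟩ : ∃ m, n = m + 1 := ⟨n - 1, by omega⟩
  obtain ⟨k, rfl⟩ : ∃ k, j = k + 1 := ⟨j - 1, by omega⟩
  exact anj_succ_succ (by omega)
end
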